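/- arXiv:1710.05338 — 8 statements merged into one kernel-verified Lean document; each statement's English description precedes it below -/
import Mathlib

section
/- Let λ > 0, θ > 0 and let v ∈ ℝ with v ≠ 0. Define v₁ := sign(v)·max(θ, |v|). Then |v₁| ≥ θ, and v₁ is a global minimizer of the function x ↦ (1/2)(x − v)² + λ·min(|x|, θ) over the set {x ∈ ℝ : |x| ≥ θ}. -/
/-- For `λ, θ > 0` and `v ≠ 0`, the point `v₁ = sign(v)·max(θ, |v|)`
satisfies `|v₁| ≥ θ` and minimizes `x ↦ (1/2)(x − v)² + λ·min(|x|, θ)` over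
`{x : |x| ≥ θ}`. -/
theorem cappedL1_prox_outer_branch
    (lam θ v : ℝ) (hlam : 0 < lam) (hθ : 0 < θ) (hv : v ≠ 0) :
    let v₁ := Real.sign v * max θ |v|
    θ ≤ |v₁| ∧
    ∀ x : ℝ, θ ≤ |x| →
      (1 / 2) * (v₁ - v) ^ 2 + lam * min |v₁| θ ≤
        (1 / 2) * (x - v) ^ 2 + lam * min |x| θ := by
  intro v₁
  have hsign : |Real.sign v| = 1 := by
    rcases lt_or_gt_of_ne hv with h | h
    · simp [Real.sign_of_neg h]
    · simp [Real.sign_of_pos h]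
  have habs : |v₁| = max θ |v| := by
    rw [abs_mul, hsign, one_mul, abs_of_nonneg (le_trans hθ.le (le_max_left _ _))]
  have hv₁ : θ ≤ |v₁| := habs ▸ le_max_left _ _
  refine ⟨hv₁, fun x hx => ?_⟩
  rw [min_eq_right hv₁, min_eq_right hx]
  have key : (v₁ - v) ^ 2 ≤ (x - v) ^ 2 := by
    rcases le_or_gt θ |v| with h | h
    · have hv1v : v₁ = v := by
        show Real.sign v * max θ |v| = v
        rw [max_eq_right h]
        rcases lt_or_gt_of_ne hv with hn | hp
        · rw [Real.sign_of_neg hn, abs_of_neg hn]; ring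
        · rw [Real.sign_of_pos hp, abs_of_pos hp]; ring
      rw [hv1v]
      simpa using sq_nonneg (x - v)
    · have hvv : v₁ = Real.sign v * θ := by
        rw [show v₁ = Real.sign v * max θ |v| from rfl, max_eq_left h.le]
      have h1 : |v₁ - v| = θ - |v| := by
        rcases lt_or_gt_of_ne hv with hn | hp
        · rw [abs_of_neg hn] at h ⊢
          rw [hvv, Real.sign_of_neg hn, abs_of_nonpos (by linarith)]; ring
        · rw [abs_of_pos hp] at h ⊢
          rw [hvv, Real.sign_of_pos hp, abs_of_nonneg (by linarith)]; ring
      have h2 : θ - |v| ≤ |x - v| := by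
        have := abs_sub_abs_le_abs_sub x v
        linarith
      have := sq_abs (v₁ - v)
      have := sq_abs (x - v)
      nlinarith [abs_nonneg (x - v)]
  linarith
end

section
/- Let λ > 0, θ > 0 and let v ∈ ℝ. Define v₂ := sign(v)·min(θ, (|v| − λ)₊), where (a)₊ = max(a, 0). Then |v₂| ≤ θ, and v₂ is a global minimizer of the function x ↦ (1/2)(x − v)² + λ·min(|x|, θ) over the set {x ∈ ℝ : |x| ≤ θ}. -/
/-- For `λ, θ > 0` and `v ∈ ℝ`, the point
`v₂ = sign(v)·min(θ, (|v| − λ)₊)` satisfies `|v₂| ≤ θ` and minimizes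
`x ↦ (1/2)(x − v)² + λ·min(|x|, θ)` over `{x : |x| ≤ θ}`. -/
theorem cappedL1_prox_inner_branch
    (lam θ v : ℝ) (hlam : 0 < lam) (hθ : 0 < θ) :
    let v₂ := Real.sign v * min θ (max (|v| - lam) 0)
    |v₂| ≤ θ ∧
    ∀ x : ℝ, |x| ≤ θ →
      (1 / 2) * (v₂ - v) ^ 2 + lam * min |v₂| θ ≤
        (1 / 2) * (x - v) ^ 2 + lam * min |x| θ := by
  intro v₂
  have hm0 : 0 ≤ min θ (max (|v| - lam) 0) := le_min hθ.le (le_max_right _ _)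
  have hmθ : min θ (max (|v| - lam) 0) ≤ θ := min_le_left _ _
  have habs : |v₂| ≤ θ := by
    have : |v₂| = |Real.sign v| * min θ (max (|v| - lam) 0) := by
      rw [abs_mul, abs_of_nonneg hm0]
    rw [this]
    rcases lt_trichotomy v 0 with h | h | h
    · rw [Real.sign_of_neg h]; simpa using hmθ
    · simp [h, hθ.le]
    · rw [Real.sign_of_pos h]; simpa using hmθ
  refine ⟨habs, fun x hx => ?_⟩
  rw [min_eq_left hx, min_eq_left habs]
  have hx1 : x ≤ |x| := le_abs_self x
  have hx2 : -x ≤ |x| := neg_le_abs x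
  rw [abs_le] at hx
  rcases lt_trichotomy v 0 with h | h | h
  · have hs : Real.sign v = -1 := Real.sign_of_neg h
    have hav : |v| = -v := abs_of_neg h
    have hv₂ : v₂ = -min θ (max (-v - lam) 0) := by
      simp [v₂, hs, hav]
    have hv₂abs : |v₂| = min θ (max (-v - lam) 0) := by
      rw [hv₂, abs_neg, abs_of_nonneg]
      exact le_min hθ.le (le_max_right _ _)
    rw [hv₂abs, hv₂]
    rcases le_or_gt (-v - lam) 0 with hc | hc
    · rw [max_eq_right hc, min_eq_right hθ.le]
      simp only [neg_zero]
      nlinarith [sq_nonneg x, sq_nonneg (x - v)]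
    · rw [max_eq_left hc.le]
      rcases le_or_gt θ (-v - lam) with hc2 | hc2
      · rw [min_eq_left hc2]
        nlinarith [mul_nonneg (sub_nonneg.mpr hx.2) hlam.le]
      · rw [min_eq_right hc2.le]
        nlinarith [sq_nonneg (x - v - lam)]
  · have : v₂ = 0 := by simp [v₂, h]
    rw [this, h]
    simp only [abs_zero, sub_zero]
    nlinarith [abs_nonneg x, sq_nonneg x]
  · have hs : Real.sign v = 1 := Real.sign_of_pos h
    have hav : |v| = v := abs_of_pos h
    have hv₂ : v₂ = min θ (max (v - lam) 0) := by
      simp [v₂, hs, hav]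
    have hv₂abs : |v₂| = min θ (max (v - lam) 0) := by
      rw [hv₂, abs_of_nonneg]
      exact le_min hθ.le (le_max_right _ _)
    rw [hv₂abs, hv₂]
    rcases le_or_gt (v - lam) 0 with hc | hc
    · rw [max_eq_right hc, min_eq_right hθ.le]
      nlinarith [sq_nonneg x, sq_nonneg (x - v)]
    · rw [max_eq_left hc.le]
      rcases le_or_gt θ (v - lam) with hc2 | hc2
      · rw [min_eq_left hc2]
        nlinarith [mul_nonneg (sub_nonneg.mpr hx.2) hlam.le]
      · rw [min_eq_right hc2.le]
        nlinarith [sq_nonneg (x - v + lam)]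
end

section
/- Let λ > 0, θ > 0 and v ∈ ℝ. Define h₂(x) := (1/2)(x − v)² + λ·min(|x|, θ), v₁ := sign(v)·max(θ, |v|) and v₂ := sign(v)·min(θ, (|v| − λ)₊). Then h₂ attains its global minimum over ℝ, the minimum value equals min(h₂(v₁), h₂(v₂)), and the point v* defined as v₁ if h₂(v₁) ≤ h₂(v₂) and as v₂ otherwise is a global minimizer of h₂ over ℝ. -/
private lemma cappedL1_helper (lam θ v : ℝ) (hlam : 0 < lam) (hθ : 0 < θ)
    (hv : 0 < v) (x : ℝ) :
    min ((1 / 2) * (max θ v - v) ^ 2 + lam * min |max θ v| θ)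
        ((1 / 2) * (min θ (max (v - lam) 0) - v) ^ 2
          + lam * min |min θ (max (v - lam) 0)| θ)
      ≤ (1 / 2) * (x - v) ^ 2 + lam * min |x| θ := by
  have hv1θ : θ ≤ max θ v := le_max_left _ _
  have hv1abs : |max θ v| = max θ v := abs_of_pos (lt_of_lt_of_le hθ hv1θ)
  have hv2nonneg : (0:ℝ) ≤ min θ (max (v - lam) 0) := le_min hθ.le (le_max_right _ _)
  have hv2θ : min θ (max (v - lam) 0) ≤ θ := min_le_left _ _
  have hv2abs : |min θ (max (v - lam) 0)| = min θ (max (v - lam) 0) :=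
    abs_of_nonneg hv2nonneg
  rw [hv1abs, hv2abs, min_eq_right hv1θ, min_eq_left hv2θ]
  rcases le_or_gt θ |x| with hx | hx
  · -- outer region: compare with v₁
    refine le_trans (min_le_left _ _) ?_
    rw [min_eq_right hx]
    rcases le_or_gt v θ with hvθ | hvθ
    · rw [max_eq_left hvθ]
      rcases abs_cases x with ⟨h1, h2⟩ | ⟨h1, h2⟩ <;> nlinarith
    · rw [max_eq_right hvθ.le]
      nlinarith [sq_nonneg (x - v)]
  · -- inner region: compare with v₂
    refine le_trans (min_le_right _ _) ?_
    rw [min_eq_left hx.le]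
    rcases le_or_gt v lam with hvl | hvl
    · have hv2' : min θ (max (v - lam) 0) = 0 := by
        rw [max_eq_right (by linarith), min_eq_right hθ.le]
      rw [hv2']
      nlinarith [abs_nonneg x, le_abs_self x, sq_nonneg x]
    · rcases le_or_gt (v - lam) θ with hc | hc
      · have hv2' : min θ (max (v - lam) 0) = v - lam := by
          rw [max_eq_left (by linarith), min_eq_right hc]
        rw [hv2']
        nlinarith [le_abs_self x, sq_nonneg (x - v + lam)]
      · have hv2' : min θ (max (v - lam) 0) = θ := by
          rw [max_eq_left (by linarith), min_eq_left hc.le]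
        rw [hv2']
        have h1 : x ≤ θ := le_trans (le_abs_self x) hx.le
        nlinarith [mul_nonneg (show (0:ℝ) ≤ θ - x by linarith)
            (show (0:ℝ) ≤ 2 * v - θ - x - 2 * lam by linarith), le_abs_self x]

open Classical in
/-- The capped ℓ₁ prox objective `h₂(x) = (1/2)(x − v)² + λ·min(|x|, θ)`
attains its global minimum over `ℝ`, the minimum value equals `min(h₂(v₁), h₂(v₂))`
for `v₁ = sign(v)·max(θ, |v|)` and `v₂ = sign(v)·min(θ, (|v| − λ)₊)`, and
`v* := if h₂(v₁) ≤ h₂(v₂) then v₁ else v₂` is a global minimizer. -/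
theorem cappedL1_prox_formula
    (lam θ v : ℝ) (hlam : 0 < lam) (hθ : 0 < θ) :
    let h₂ : ℝ → ℝ := fun x => (1 / 2) * (x - v) ^ 2 + lam * min |x| θ
    let v₁ := Real.sign v * max θ |v|
    let v₂ := Real.sign v * min θ (max (|v| - lam) 0)
    let vstar := if h₂ v₁ ≤ h₂ v₂ then v₁ else v₂
    (∀ x : ℝ, h₂ vstar ≤ h₂ x) ∧ h₂ vstar = min (h₂ v₁) (h₂ v₂) := by
  intro h₂ v₁ v₂ vstar
  have hh : ∀ x, h₂ x = (1 / 2) * (x - v) ^ 2 + lam * min |x| θ := fun _ => rfl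
  have hv1 : v₁ = Real.sign v * max θ |v| := rfl
  have hv2 : v₂ = Real.sign v * min θ (max (|v| - lam) 0) := rfl
  have hvs : vstar = if h₂ v₁ ≤ h₂ v₂ then v₁ else v₂ := rfl
  have key : ∀ x, min (h₂ v₁) (h₂ v₂) ≤ h₂ x := by
    intro x
    rcases lt_trichotomy v 0 with hneg | hzero | hpos
    · have h := cappedL1_helper lam θ (-v) hlam hθ (by linarith) (-x)
      have e1 : h₂ v₁ = (1 / 2) * (max θ (-v) - -v) ^ 2 + lam * min |max θ (-v)| θ := by
        rw [hh, hv1, Real.sign_of_neg hneg, abs_of_neg hneg,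
          show (-1 : ℝ) * max θ (-v) = -(max θ (-v)) by ring, abs_neg]
        ring_nf
      have e2 : h₂ v₂ = (1 / 2) * (min θ (max (-v - lam) 0) - -v) ^ 2
          + lam * min |min θ (max (-v - lam) 0)| θ := by
        rw [hh, hv2, Real.sign_of_neg hneg, abs_of_neg hneg,
          show (-1 : ℝ) * min θ (max (-v - lam) 0) = -(min θ (max (-v - lam) 0)) by ring,
          abs_neg]
        ring_nf
      have e3 : h₂ x = (1 / 2) * (-x - -v) ^ 2 + lam * min |(-x)| θ := by
        rw [hh, abs_neg]; ring_nf
      rw [e1, e2, e3]; exact h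
    · subst hzero
      have e1 : h₂ v₁ = 0 := by
        rw [hh, hv1]; simp [Real.sign_zero, hθ.le]
      have e0 : (0:ℝ) ≤ h₂ x := by
        rw [hh]
        have : (0:ℝ) ≤ min |x| θ := le_min (abs_nonneg x) hθ.le
        positivity
      calc min (h₂ v₁) (h₂ v₂) ≤ h₂ v₁ := min_le_left _ _
        _ = 0 := e1
        _ ≤ h₂ x := e0
    · have h := cappedL1_helper lam θ v hlam hθ hpos x
      have e1 : h₂ v₁ = (1 / 2) * (max θ v - v) ^ 2 + lam * min |max θ v| θ := by
        rw [hh, hv1, Real.sign_of_pos hpos, abs_of_pos hpos, one_mul]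
      have e2 : h₂ v₂ = (1 / 2) * (min θ (max (v - lam) 0) - v) ^ 2
          + lam * min |min θ (max (v - lam) 0)| θ := by
        rw [hh, hv2, Real.sign_of_pos hpos, abs_of_pos hpos, one_mul]
      rw [e1, e2, hh]; exact h
  have hmin : h₂ vstar = min (h₂ v₁) (h₂ v₂) := by
    rw [hvs]
    split_ifs with hcond
    · exact (min_eq_left hcond).symm
    · exact (min_eq_right (le_of_not_ge hcond)).symm
  exact ⟨fun x => hmin ▸ key x, hmin⟩
end

section
/- Let λ > 0, γ > 2 and u ∈ ℝ. Define u₁ := sign(u)·min(λ, (|u| − λ)₊), where (a)₊ = max(a, 0). Then |u₁| ≤ λ, and u₁ is a global minimizer of the function x ↦ (1/2)(x − u)² + λ|x| over the set {x ∈ ℝ : |x| ≤ λ}. -/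
/-- For `λ > 0`, `γ > 2`, `u ∈ ℝ`, the point
`u₁ = sign(u)·min(λ, (|u| − λ)₊)` satisfies `|u₁| ≤ λ` and minimizes
`x ↦ (1/2)(x − u)² + λ|x|` over `{x : |x| ≤ λ}`. -/
theorem scad_prox_inner_branch
    (lam γ u : ℝ) (hlam : 0 < lam) (hγ : 2 < γ) :
    let u₁ := Real.sign u * min lam (max (|u| - lam) 0)
    |u₁| ≤ lam ∧
    ∀ x : ℝ, |x| ≤ lam →
      (1 / 2) * (u₁ - u) ^ 2 + lam * |u₁| ≤ (1 / 2) * (x - u) ^ 2 + lam * |x| := by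
  intro u₁
  have hm0 : 0 ≤ min lam (max (|u| - lam) 0) := le_min hlam.le (le_max_right _ _)
  have hm1 : min lam (max (|u| - lam) 0) ≤ lam := min_le_left _ _
  rcases lt_trichotomy u 0 with hu | hu | hu
  · -- u < 0
    have hs : Real.sign u = -1 := Real.sign_of_neg hu
    have habsu : |u| = -u := abs_of_neg hu
    have hu1 : u₁ = - min lam (max (-u - lam) 0) := by
      simp [u₁, hs, habsu]
    have habs1 : |u₁| = min lam (max (-u - lam) 0) := by
      rw [hu1, abs_neg, abs_of_nonneg]
      rw [habsu] at hm0; exact hm0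
    rw [habsu] at hm1
    constructor
    · rw [habs1]; exact hm1
    · intro x hx
      rw [habs1, hu1]
      have hx1 : -lam ≤ x := (abs_le.mp hx).1
      have hx2 : x ≤ lam := (abs_le.mp hx).2
      have hxabs : -x ≤ |x| := neg_le_abs x
      rcases le_or_gt (-u - lam) 0 with h1 | h1
      · -- -u ≤ lam, u₁ = 0
        have : max (-u - lam) 0 = 0 := max_eq_right h1
        rw [this, min_eq_right hlam.le]
        nlinarith [abs_nonneg x, sq_nonneg x,
          mul_le_mul_of_nonneg_left (neg_abs_le x) (by linarith : (0:ℝ) ≤ -u),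
          mul_le_mul_of_nonneg_right (by linarith : -u ≤ lam) (abs_nonneg x)]
      · rcases le_or_gt (-u - lam) lam with h2 | h2
        · have : min lam (max (-u - lam) 0) = -u - lam := by
            rw [max_eq_left h1.le, min_eq_right h2]
          rw [this]
          nlinarith [sq_nonneg (x - (u + lam))]
        · have : min lam (max (-u - lam) 0) = lam := by
            rw [max_eq_left h1.le, min_eq_left h2.le]
          rw [this]
          nlinarith [mul_nonneg (by linarith : (0:ℝ) ≤ x + lam) (by linarith : (0:ℝ) ≤ x/2 - 3*lam/2 - u)]
  · -- u = 0
    have : u₁ = 0 := by simp [u₁, hu]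
    rw [this]
    constructor
    · simpa using hlam.le
    · intro x hx
      subst hu
      simp only [abs_zero, sub_zero, mul_zero, add_zero]
      nlinarith [abs_nonneg x, sq_nonneg x]
  · -- u > 0
    have hs : Real.sign u = 1 := Real.sign_of_pos hu
    have habsu : |u| = u := abs_of_pos hu
    have hu1 : u₁ = min lam (max (u - lam) 0) := by
      simp [u₁, hs, habsu]
    rw [habsu] at hm0 hm1
    have habs1 : |u₁| = min lam (max (u - lam) 0) := by
      rw [hu1, abs_of_nonneg hm0]
    constructor
    · rw [habs1]; exact hm1
    · intro x hx
      rw [habs1, hu1]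
      have hx1 : -lam ≤ x := (abs_le.mp hx).1
      have hx2 : x ≤ lam := (abs_le.mp hx).2
      have hxabs : x ≤ |x| := le_abs_self x
      rcases le_or_gt (u - lam) 0 with h1 | h1
      · have : max (u - lam) 0 = 0 := max_eq_right h1
        rw [this, min_eq_right hlam.le]
        nlinarith [abs_nonneg x, sq_nonneg x,
          mul_le_mul_of_nonneg_left hxabs hu.le,
          mul_le_mul_of_nonneg_right (by linarith : u ≤ lam) (abs_nonneg x)]
      · rcases le_or_gt (u - lam) lam with h2 | h2
        · have : min lam (max (u - lam) 0) = u - lam := by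
            rw [max_eq_left h1.le, min_eq_right h2]
          rw [this]
          nlinarith [sq_nonneg (x - (u - lam))]
        · have : min lam (max (u - lam) 0) = lam := by
            rw [max_eq_left h1.le, min_eq_left h2.le]
          rw [this]
          nlinarith [mul_nonneg (by linarith : (0:ℝ) ≤ lam - x) (by linarith : (0:ℝ) ≤ -x/2 - 3*lam/2 + u)]
end

section
/- Let λ > 0, γ > 2 and let u ∈ ℝ with u ≠ 0. Define u₂ := sign(u)·min(γλ, max(λ, (|u|(γ − 1) − γλ)/(γ − 2))). Then λ ≤ |u₂| ≤ γλ, and u₂ is a global minimizer of the function x ↦ (1/2)(x − u)² + (2γλ|x| − (x² + λ²))/(2(γ − 1)) over the set {x ∈ ℝ : λ ≤ |x| ≤ γλ}. -/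
/-- For `λ > 0`, `γ > 2`, `u ≠ 0`, the point
`u₂ = sign(u)·min(γλ, max(λ, (|u|(γ − 1) − γλ)/(γ − 2)))` satisfies `λ ≤ |u₂| ≤ γλ`
and minimizes `x ↦ (1/2)(x − u)² + (2γλ|x| − (x² + λ²))/(2(γ − 1))` over
`{x : λ ≤ |x| ≤ γλ}`. -/
theorem scad_prox_middle_branch
    (lam γ u : ℝ) (hlam : 0 < lam) (hγ : 2 < γ) (hu : u ≠ 0) :
    let u₂ := Real.sign u * min (γ * lam) (max lam ((|u| * (γ - 1) - γ * lam) / (γ - 2)))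
    (lam ≤ |u₂| ∧ |u₂| ≤ γ * lam) ∧
    ∀ x : ℝ, lam ≤ |x| → |x| ≤ γ * lam →
      (1 / 2) * (u₂ - u) ^ 2 + (2 * γ * lam * |u₂| - (u₂ ^ 2 + lam ^ 2)) / (2 * (γ - 1)) ≤
        (1 / 2) * (x - u) ^ 2 + (2 * γ * lam * |x| - (x ^ 2 + lam ^ 2)) / (2 * (γ - 1)) := by
  intro u₂
  have hγ1 : (0:ℝ) < γ - 1 := by linarith
  have hγ2 : (0:ℝ) < γ - 2 := by linarith
  set t := (|u| * (γ - 1) - γ * lam) / (γ - 2) with ht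
  set m := min (γ * lam) (max lam t) with hm
  have htc : t * (γ - 2) = |u| * (γ - 1) - γ * lam := by
    rw [ht]; field_simp
  have hmlam : lam ≤ m := le_min (by nlinarith) (le_max_left _ _)
  have hmγ : m ≤ γ * lam := min_le_left _ _
  have hm0 : 0 < m := lt_of_lt_of_le hlam hmlam
  have hs : |Real.sign u| = 1 := by
    rcases lt_or_gt_of_ne hu with h | h
    · rw [Real.sign_of_neg h]; simp
    · rw [Real.sign_of_pos h]; simp
  have habs : |u₂| = m := by
    show |Real.sign u * m| = m
    rw [abs_mul, hs, one_mul, abs_of_pos hm0]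
  have hsu : Real.sign u * u = |u| := by
    rcases lt_or_gt_of_ne hu with h | h
    · rw [Real.sign_of_neg h, abs_of_neg h]; ring
    · rw [Real.sign_of_pos h, abs_of_pos h]; ring
  have hs2 : Real.sign u * Real.sign u = 1 := by
    rcases lt_or_gt_of_ne hu with h | h
    · rw [Real.sign_of_neg h]; norm_num
    · rw [Real.sign_of_pos h]; norm_num
  refine ⟨⟨by rw [habs]; exact hmlam, by rw [habs]; exact hmγ⟩, ?_⟩
  intro x hx1 hx2
  rw [habs]
  have hu₂sq : u₂ ^ 2 = m ^ 2 := by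
    show (Real.sign u * m) ^ 2 = m ^ 2
    rw [mul_pow]
    nlinarith [hs2]
  have hu₂u : u₂ * u = |u| * m := by
    show Real.sign u * m * u = |u| * m
    rw [mul_comm (Real.sign u) m, mul_assoc, hsu]; ring
  have hxu : x * u ≤ |x| * |u| := by
    calc x * u ≤ |x * u| := le_abs_self _
    _ = |x| * |u| := abs_mul _ _
  have hxsq : x ^ 2 = |x| ^ 2 := (sq_abs x).symm
  have key : 0 ≤ (|x| - m) * ((|x| + m) * (γ - 2) - 2 * (|u| * (γ - 1) - γ * lam)) := by
    rcases le_or_gt m |x| with h | h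
    · rcases le_or_gt (γ * lam) (max lam t) with h2 | h2
      · -- m = γ * lam, so |x| = m
        have hmeq : m = γ * lam := min_eq_left h2
        have : |x| = m := le_antisymm (hmeq ▸ hx2) h
        rw [this]; simp
      · -- m = max lam t ≥ t
        have hmt : t ≤ m := by
          rw [hm, min_eq_right h2.le]; exact le_max_right _ _
        have h1 : t * (γ - 2) ≤ m * (γ - 2) :=
          mul_le_mul_of_nonneg_right hmt hγ2.le
        have h2' : m * (γ - 2) ≤ |x| * (γ - 2) :=
          mul_le_mul_of_nonneg_right h hγ2.le
        have f1 : 0 ≤ |x| - m := by linarith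
        have f2 : 0 ≤ (|x| + m) * (γ - 2) - 2 * (|u| * (γ - 1) - γ * lam) := by
          have hr : (|x| + m) * (γ - 2) = |x| * (γ - 2) + m * (γ - 2) := by ring
          linarith [htc]
        exact mul_nonneg f1 f2
    · -- |x| < m, need m ≤ t
      have hmmax : m ≤ max lam t := min_le_right _ _
      rcases le_or_gt t lam with h3 | h3
      · have : m ≤ lam := by rw [max_eq_left h3] at hmmax; exact hmmax
        linarith
      · have hmt : m ≤ t := by rw [max_eq_right h3.le] at hmmax; exact hmmax
        have h1 : m * (γ - 2) ≤ t * (γ - 2) :=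
          mul_le_mul_of_nonneg_right hmt hγ2.le
        have h2' : |x| * (γ - 2) ≤ m * (γ - 2) :=
          mul_le_mul_of_nonneg_right h.le hγ2.le
        have f1 : |x| - m ≤ 0 := by linarith
        have f2 : (|x| + m) * (γ - 2) - 2 * (|u| * (γ - 1) - γ * lam) ≤ 0 := by
          have hr : (|x| + m) * (γ - 2) = |x| * (γ - 2) + m * (γ - 2) := by ring
          linarith [htc]
        nlinarith [f1, f2]
  have hd : (0:ℝ) < 2 * (γ - 1) := by linarith
  have hexp : (u₂ - u) ^ 2 = m ^ 2 - 2 * (|u| * m) + u ^ 2 := by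
    have h1 : (u₂ - u) ^ 2 = u₂ ^ 2 - 2 * (u₂ * u) + u ^ 2 := by ring
    rw [h1, hu₂sq, hu₂u]
  rw [hexp, hu₂sq]
  have hxe : (x - u) ^ 2 = |x| ^ 2 - 2 * (x * u) + u ^ 2 := by
    rw [sub_sq, sq_abs]; ring
  have hid : ((1/2) * (x - u) ^ 2 + (2 * γ * lam * |x| - (x ^ 2 + lam ^ 2)) / (2 * (γ - 1)))
      - ((1/2) * (m ^ 2 - 2 * (|u| * m) + u ^ 2)
        + (2 * γ * lam * m - (m ^ 2 + lam ^ 2)) / (2 * (γ - 1)))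
      = ((|x| - m) * ((|x| + m) * (γ - 2) - 2 * (|u| * (γ - 1) - γ * lam))
          + 2 * (γ - 1) * (|x| * |u| - x * u)) / (2 * (γ - 1)) := by
    rw [hxe, hxsq]
    generalize |x| = X
    generalize |u| = U
    field_simp
    ring
  have hnum : 0 ≤ ((|x| - m) * ((|x| + m) * (γ - 2) - 2 * (|u| * (γ - 1) - γ * lam))
      + 2 * (γ - 1) * (|x| * |u| - x * u)) / (2 * (γ - 1)) := by
    apply div_nonneg _ hd.le
    have h2 : 0 ≤ (γ - 1) * (|x| * |u| - x * u) := by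
      apply mul_nonneg (by linarith)
      linarith [hxu]
    linarith [key, h2]
  linarith [hid, hnum]
end

section
/- Let λ > 0, γ > 2 and u ∈ ℝ. Define h₁(x) := (1/2)(x − u)² + r_{λ,γ}(x), u₁ := sign(u)·min(λ, (|u| − λ)₊), u₂ := sign(u)·min(γλ, max(λ, (|u|(γ − 1) − γλ)/(γ − 2))), and u₃ := sign(u)·max(γλ, |u|). Then h₁ attains its global minimum over ℝ, the minimum value equals min(h₁(u₁), h₁(u₂), h₁(u₃)), and at least one of u₁, u₂, u₃ is a global minimizer of h₁ over ℝ. -/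
open Classical in
/-- The SCAD penalty `r_{λ,γ}`. -/
noncomputable def scadPenalty (lam γ x : ℝ) : ℝ :=
  if |x| ≤ lam then lam * |x|
  else if |x| ≤ γ * lam then (2 * γ * lam * |x| - (x ^ 2 + lam ^ 2)) / (2 * (γ - 1))
  else lam ^ 2 * (γ ^ 2 - 1) / (2 * (γ - 1))

lemma scad_pen_abs (lam γ x : ℝ) : scadPenalty lam γ x = scadPenalty lam γ |x| := by
  simp [scadPenalty, abs_abs, sq_abs]

lemma scad_pen_lo (lam γ x : ℝ) (h0 : 0 ≤ x) (h1 : x ≤ lam) :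
    scadPenalty lam γ x = lam * x := by
  rw [scadPenalty, if_pos (by rwa [abs_of_nonneg h0]), abs_of_nonneg h0]

lemma scad_pen_mid (lam γ x : ℝ) (hlam : 0 < lam) (hγ : 2 < γ) (h1 : lam ≤ x)
    (h2 : x ≤ γ * lam) :
    scadPenalty lam γ x = (2 * γ * lam * x - (x ^ 2 + lam ^ 2)) / (2 * (γ - 1)) := by
  have h0 : 0 ≤ x := le_trans hlam.le h1
  rw [scadPenalty, abs_of_nonneg h0]
  by_cases hx : x ≤ lam
  · have hxl : x = lam := le_antisymm hx h1
    subst hxl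
    rw [if_pos le_rfl]
    have : γ - 1 ≠ 0 := by intro h; nlinarith
    field_simp
    ring
  · rw [if_neg hx, if_pos h2]

lemma scad_pen_hi (lam γ x : ℝ) (hlam : 0 < lam) (hγ : 2 < γ) (h : γ * lam ≤ x) :
    scadPenalty lam γ x = lam ^ 2 * (γ ^ 2 - 1) / (2 * (γ - 1)) := by
  have h0 : 0 ≤ x := le_trans (by nlinarith) h
  rw [scadPenalty, abs_of_nonneg h0]
  have hxl : ¬ x ≤ lam := by nlinarith
  rw [if_neg hxl]
  by_cases hx : x ≤ γ * lam
  · have hxe : x = γ * lam := le_antisymm hx h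
    subst hxe
    rw [if_pos le_rfl]
    have : γ - 1 ≠ 0 := by intro h; nlinarith
    field_simp
    ring
  · rw [if_neg hx]

lemma scad_pen_nonneg (lam γ x : ℝ) (hlam : 0 < lam) (hγ : 2 < γ) :
    0 ≤ scadPenalty lam γ x := by
  have hax : 0 ≤ |x| := abs_nonneg x
  have hsq : |x| ^ 2 = x ^ 2 := sq_abs x
  rw [scadPenalty]
  split_ifs with h1 h2
  · positivity
  · push_neg at h1
    apply div_nonneg _ (by linarith)
    nlinarith [mul_nonneg (sub_nonneg.2 h1.le) (sub_nonneg.2 h2)]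
  · apply div_nonneg _ (by linarith)
    exact mul_nonneg (sq_nonneg lam) (by nlinarith)

lemma clamp_sq (lo hi c t : ℝ) (hlo : lo ≤ t) (hhi : t ≤ hi) :
    (min hi (max lo c) - c) ^ 2 ≤ (t - c) ^ 2 := by
  rcases le_total c lo with h | h
  · rw [max_eq_left h, min_eq_right (hlo.trans hhi)]
    nlinarith
  · rw [max_eq_right h]
    rcases le_total c hi with h2 | h2
    · rw [min_eq_right h2]
      nlinarith [sq_nonneg (t - c)]
    · rw [min_eq_left h2]
      nlinarith

lemma clamp_sq' (lo c t : ℝ) (hlo : lo ≤ t) :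
    (max lo c - c) ^ 2 ≤ (t - c) ^ 2 := by
  rcases le_total c lo with h | h
  · rw [max_eq_left h]
    nlinarith
  · rw [max_eq_right h]
    nlinarith [sq_nonneg (t - c)]

set_option maxHeartbeats 1000000 in
/-- Key lemma: on the nonnegative half-line with shifted center `a ≥ 0`,
the min over the three candidate points bounds the objective. -/
lemma scad_key (lam γ a t : ℝ) (hlam : 0 < lam) (hγ : 2 < γ) (ha : 0 ≤ a) (ht : 0 ≤ t) :
    min ((1 / 2) * (min lam (max (a - lam) 0) - a) ^ 2
          + scadPenalty lam γ (min lam (max (a - lam) 0)))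
      (min ((1 / 2) * (min (γ * lam) (max lam ((a * (γ - 1) - γ * lam) / (γ - 2))) - a) ^ 2
            + scadPenalty lam γ (min (γ * lam) (max lam ((a * (γ - 1) - γ * lam) / (γ - 2)))))
        ((1 / 2) * (max (γ * lam) a - a) ^ 2 + scadPenalty lam γ (max (γ * lam) a)))
      ≤ (1 / 2) * (t - a) ^ 2 + scadPenalty lam γ t := by
  set v₁ := min lam (max (a - lam) 0) with hv1
  set v₂ := min (γ * lam) (max lam ((a * (γ - 1) - γ * lam) / (γ - 2))) with hv2
  set v₃ := max (γ * lam) a with hv3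
  have hγ1 : (0:ℝ) < γ - 1 := by linarith
  have hγ2 : (0:ℝ) < γ - 2 := by linarith
  have hγl : lam ≤ γ * lam := by nlinarith
  have hv1a : 0 ≤ v₁ := le_min hlam.le (le_max_right _ _)
  have hv1b : v₁ ≤ lam := min_le_left _ _
  have hv2a : lam ≤ v₂ := le_min hγl (le_max_left _ _)
  have hv2b : v₂ ≤ γ * lam := min_le_left _ _
  have hv3a : γ * lam ≤ v₃ := le_max_left _ _
  have hg1 : scadPenalty lam γ v₁ = lam * v₁ := scad_pen_lo _ _ _ hv1a hv1b
  have hg2 : scadPenalty lam γ v₂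
      = (2 * γ * lam * v₂ - (v₂ ^ 2 + lam ^ 2)) / (2 * (γ - 1)) :=
    scad_pen_mid _ _ _ hlam hγ hv2a hv2b
  have hg3 : scadPenalty lam γ v₃ = lam ^ 2 * (γ ^ 2 - 1) / (2 * (γ - 1)) :=
    scad_pen_hi _ _ _ hlam hγ hv3a
  rcases le_or_gt t lam with h | h
  · -- region 1
    have hpt : scadPenalty lam γ t = lam * t := scad_pen_lo _ _ _ ht h
    have hsq : (v₁ - (a - lam)) ^ 2 ≤ (t - (a - lam)) ^ 2 := by
      rw [hv1, max_comm]
      exact clamp_sq 0 lam (a - lam) t ht h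
    have : (1 / 2) * (v₁ - a) ^ 2 + scadPenalty lam γ v₁
        ≤ (1 / 2) * (t - a) ^ 2 + scadPenalty lam γ t := by
      rw [hg1, hpt]; nlinarith
    exact le_trans (min_le_left _ _) this
  · rcases le_or_gt t (γ * lam) with h2 | h2
    · -- region 2
      have hpt : scadPenalty lam γ t
          = (2 * γ * lam * t - (t ^ 2 + lam ^ 2)) / (2 * (γ - 1)) :=
        scad_pen_mid _ _ _ hlam hγ h.le h2
      have hsq0 : (v₂ - (a * (γ - 1) - γ * lam) / (γ - 2)) ^ 2
          ≤ (t - (a * (γ - 1) - γ * lam) / (γ - 2)) ^ 2 := by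
        rw [hv2]
        exact clamp_sq lam (γ * lam) _ t h.le h2
      have hsq : ((γ - 2) * v₂ - (a * (γ - 1) - γ * lam)) ^ 2
          ≤ ((γ - 2) * t - (a * (γ - 1) - γ * lam)) ^ 2 := by
        have e1 : ((γ - 2) * v₂ - (a * (γ - 1) - γ * lam)) ^ 2
            = (γ - 2) ^ 2 * (v₂ - (a * (γ - 1) - γ * lam) / (γ - 2)) ^ 2 := by
          field_simp
        have e2 : ((γ - 2) * t - (a * (γ - 1) - γ * lam)) ^ 2
            = (γ - 2) ^ 2 * (t - (a * (γ - 1) - γ * lam) / (γ - 2)) ^ 2 := by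
          field_simp
        rw [e1, e2]
        nlinarith [sq_nonneg (γ - 2)]
      have hdiff : ((1 / 2) * (t - a) ^ 2 + (2 * γ * lam * t - (t ^ 2 + lam ^ 2)) / (2 * (γ - 1)))
          - ((1 / 2) * (v₂ - a) ^ 2 + (2 * γ * lam * v₂ - (v₂ ^ 2 + lam ^ 2)) / (2 * (γ - 1)))
          = (((γ - 2) * t - (a * (γ - 1) - γ * lam)) ^ 2
              - ((γ - 2) * v₂ - (a * (γ - 1) - γ * lam)) ^ 2) / (2 * (γ - 1) * (γ - 2)) := by
        field_simp
        ring
      have hpos : 0 ≤ (((γ - 2) * t - (a * (γ - 1) - γ * lam)) ^ 2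
          - ((γ - 2) * v₂ - (a * (γ - 1) - γ * lam)) ^ 2) / (2 * (γ - 1) * (γ - 2)) :=
        div_nonneg (sub_nonneg.2 hsq) (by positivity)
      have : (1 / 2) * (v₂ - a) ^ 2 + scadPenalty lam γ v₂
          ≤ (1 / 2) * (t - a) ^ 2 + scadPenalty lam γ t := by
        rw [hg2, hpt]; linarith
      exact le_trans (min_le_right _ _) (le_trans (min_le_left _ _) this)
    · -- region 3
      have hpt : scadPenalty lam γ t = lam ^ 2 * (γ ^ 2 - 1) / (2 * (γ - 1)) :=
        scad_pen_hi _ _ _ hlam hγ h2.le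
      have hsq : (v₃ - a) ^ 2 ≤ (t - a) ^ 2 := clamp_sq' (γ * lam) a t h2.le
      have : (1 / 2) * (v₃ - a) ^ 2 + scadPenalty lam γ v₃
          ≤ (1 / 2) * (t - a) ^ 2 + scadPenalty lam γ t := by
        rw [hg3, hpt]; linarith
      exact le_trans (min_le_right _ _) (le_trans (min_le_right _ _) this)

lemma exists_min3 (A B C : ℝ) :
    min A (min B C) = A ∨ min A (min B C) = B ∨ min A (min B C) = C := by
  rcases le_total A (min B C) with h | h
  · left; exact min_eq_left h
  · rcases le_total B C with h2 | h2
    · right; left; rw [min_eq_right h, min_eq_left h2]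
    · right; right; rw [min_eq_right h, min_eq_right h2]

set_option maxHeartbeats 1000000 in
/-- The SCAD prox objective `h₁(x) = (1/2)(x − u)² + r_{λ,γ}(x)` attains
its global minimum over `ℝ`, the minimum value equals `min(h₁(u₁), h₁(u₂), h₁(u₃))`,
and at least one of `u₁, u₂, u₃` is a global minimizer. -/
theorem scad_prox_formula
    (lam γ u : ℝ) (hlam : 0 < lam) (hγ : 2 < γ) :
    let h₁ : ℝ → ℝ := fun x => (1 / 2) * (x - u) ^ 2 + scadPenalty lam γ x
    let u₁ := Real.sign u * min lam (max (|u| - lam) 0)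
    let u₂ := Real.sign u * min (γ * lam) (max lam ((|u| * (γ - 1) - γ * lam) / (γ - 2)))
    let u₃ := Real.sign u * max (γ * lam) |u|
    ∃ x ∈ ({u₁, u₂, u₃} : Set ℝ),
      (∀ y : ℝ, h₁ x ≤ h₁ y) ∧ h₁ x = min (h₁ u₁) (min (h₁ u₂) (h₁ u₃)) := by
  intro h₁ u₁ u₂ u₃
  have hγ1 : (0:ℝ) < γ - 1 := by linarith
  have hγ2 : (0:ℝ) < γ - 2 := by linarith
  have hγl : lam ≤ γ * lam := by nlinarith
  have key' : ∀ y : ℝ, min (h₁ u₁) (min (h₁ u₂) (h₁ u₃)) ≤ h₁ y := by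
    rcases eq_or_ne u 0 with rfl | hu
    · have h0 : u₁ = 0 := by
        show Real.sign 0 * _ = 0; rw [Real.sign_zero, zero_mul]
      have h02 : u₂ = 0 := by
        show Real.sign 0 * _ = 0; rw [Real.sign_zero, zero_mul]
      have h03 : u₃ = 0 := by
        show Real.sign 0 * _ = 0; rw [Real.sign_zero, zero_mul]
      intro y
      have hzero : h₁ 0 = 0 := by
        show (1 / 2) * ((0:ℝ) - 0) ^ 2 + scadPenalty lam γ 0 = 0
        rw [scad_pen_lo lam γ 0 le_rfl hlam.le]
        ring
      have hy : (0:ℝ) ≤ h₁ y := by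
        show (0:ℝ) ≤ (1 / 2) * (y - 0) ^ 2 + scadPenalty lam γ y
        have := scad_pen_nonneg lam γ y hlam hγ
        nlinarith
      rw [h0, h02, h03, min_self, min_self, hzero]
      exact hy
    · set s := Real.sign u with hsdef
      set a := |u| with hadef
      have hs : s * a = u := by
        rw [hsdef, hadef]
        rcases lt_trichotomy u 0 with h | h | h
        · rw [Real.sign_of_neg h, abs_of_neg h]; ring
        · exact absurd h hu
        · rw [Real.sign_of_pos h, abs_of_pos h]; ring
      have hs1 : s = 1 ∨ s = -1 := by
        rcases lt_trichotomy u 0 with h | h | h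
        · right; exact Real.sign_of_neg h
        · exact absurd h hu
        · left; exact Real.sign_of_pos h
      have hs2 : s ^ 2 = 1 := by rcases hs1 with h | h <;> rw [h] <;> norm_num
      have habs_s : |s| = 1 := by rcases hs1 with h | h <;> rw [h] <;> norm_num
      have ha : 0 ≤ a := abs_nonneg u
      have heval : ∀ v : ℝ, 0 ≤ v →
          h₁ (s * v) = (1 / 2) * (v - a) ^ 2 + scadPenalty lam γ v := by
        intro v hv
        have h1 : (s * v - u) ^ 2 = (v - a) ^ 2 := by
          rw [← hs]
          have : (s * v - s * a) ^ 2 = s ^ 2 * (v - a) ^ 2 := by ring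
          rw [this, hs2, one_mul]
        have h2 : scadPenalty lam γ (s * v) = scadPenalty lam γ v := by
          rw [scad_pen_abs, abs_mul, habs_s, one_mul, abs_of_nonneg hv]
        show (1 / 2) * (s * v - u) ^ 2 + scadPenalty lam γ (s * v) = _
        rw [h1, h2]
      have hu1 : u₁ = s * min lam (max (a - lam) 0) := rfl
      have hu2 : u₂ = s * min (γ * lam) (max lam ((a * (γ - 1) - γ * lam) / (γ - 2))) := rfl
      have hu3 : u₃ = s * max (γ * lam) a := rfl
      have hv1a : 0 ≤ min lam (max (a - lam) 0) := le_min hlam.le (le_max_right _ _)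
      have hv2a : 0 ≤ min (γ * lam) (max lam ((a * (γ - 1) - γ * lam) / (γ - 2))) :=
        le_trans hlam.le (le_min hγl (le_max_left _ _))
      have hv3a : 0 ≤ max (γ * lam) a :=
        le_trans (le_trans hlam.le hγl) (le_max_left _ _)
      intro y
      have hsym : h₁ (s * |y|) ≤ h₁ y := by
        have hp : scadPenalty lam γ (s * |y|) = scadPenalty lam γ y := by
          rw [scad_pen_abs, abs_mul, habs_s, one_mul, abs_abs, ← scad_pen_abs]
        have hq : (s * |y| - u) ^ 2 ≤ (y - u) ^ 2 := by
          have h1 : (s * |y| - u) ^ 2 = (|y| - a) ^ 2 := by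
            rw [← hs]
            have : (s * |y| - s * a) ^ 2 = s ^ 2 * (|y| - a) ^ 2 := by ring
            rw [this, hs2, one_mul]
          rw [h1]
          have hyu : y * u ≤ |y| * a := by
            rw [hadef, ← abs_mul]; exact le_abs_self _
          have hy2 : |y| ^ 2 = y ^ 2 := sq_abs y
          have hu2' : a ^ 2 = u ^ 2 := sq_abs u
          nlinarith
        show (1 / 2) * (s * |y| - u) ^ 2 + scadPenalty lam γ (s * |y|)
            ≤ (1 / 2) * (y - u) ^ 2 + scadPenalty lam γ y
        rw [hp]
        nlinarith
      have hkey := scad_key lam γ a |y| hlam hγ ha (abs_nonneg y)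
      rw [hu1, hu2, hu3, heval _ hv1a, heval _ hv2a, heval _ hv3a]
      calc min ((1 / 2) * (min lam (max (a - lam) 0) - a) ^ 2
              + scadPenalty lam γ (min lam (max (a - lam) 0)))
            (min ((1 / 2) * (min (γ * lam) (max lam ((a * (γ - 1) - γ * lam) / (γ - 2))) - a) ^ 2
                  + scadPenalty lam γ
                      (min (γ * lam) (max lam ((a * (γ - 1) - γ * lam) / (γ - 2)))))
              ((1 / 2) * (max (γ * lam) a - a) ^ 2 + scadPenalty lam γ (max (γ * lam) a)))
          ≤ (1 / 2) * (|y| - a) ^ 2 + scadPenalty lam γ |y| := hkey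
        _ = h₁ (s * |y|) := (heval _ (abs_nonneg y)).symm
        _ ≤ h₁ y := hsym
  rcases exists_min3 (h₁ u₁) (h₁ u₂) (h₁ u₃) with h | h | h
  · exact ⟨u₁, Set.mem_insert _ _, fun y => h ▸ key' y, h.symm⟩
  · exact ⟨u₂, Set.mem_insert_of_mem _ (Set.mem_insert _ _),
      fun y => h ▸ key' y, h.symm⟩
  · exact ⟨u₃, Set.mem_insert_of_mem _ (Set.mem_insert_of_mem _ rfl),
      fun y => h ▸ key' y, h.symm⟩
end

section
/- Let A be a real m × n matrix, b ∈ ℝ^m, μ > 0 and λ > 0, and define the Lasso objective F : ℝ^n → ℝ by F(x) := μ‖Ax − b‖² + λ·Σ_{i=1}^n |x_i|. Then F is convex, and for every global minimizer x̄ of F there exist constants c > 0 and ε > 0 such that for every x ∈ ℝ^n with ‖x − x̄‖ ≤ ε and every ξ ∈ ℝ^n satisfying the subgradient inequality F(y) ≥ F(x) + ⟨ξ, y − x⟩ for all y ∈ ℝ^n, one has ‖ξ‖ ≥ c·(F(x) − F(x̄))^{1/2}. -/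
/-!
Let `w` be the gradient of `μ‖Ax - b‖²` at a minimizer `xbar`. Optimality forces `|w i| ≤ lam`
where `xbar i = 0` and `w i = -lam * sign (xbar i)` elsewhere, so for small `u`
`F (xbar + u) - F xbar = μ‖Au‖² + D u`, with `D u = ∑ (w i * u i + lam * |u i|) ≥ 0` summed over
the zero coordinates of `xbar`. `D` is the total positive part of a linear system `S u ≤ 0`, so
every small `k` with `A k = 0` and `S k ≤ 0` gives another minimizer `xbar + k`, and Hoffman's
error bound puts `u` within `C (‖Au‖₁ + D u)` of such a `k`. Both terms are
`O(√(F (xbar + u) - F xbar))`, the second because `D` is bounded near `0`, so `(D u)² = O(D u)`.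
The subgradient inequality tested at `xbar + k` then gives
`F x - F xbar ≤ ‖ξ‖ ‖x - xbar - k‖ = O(‖ξ‖ √(F x - F xbar))`.

Hoffman's bound comes from projecting `u` onto the cone spanned by the constraint rows: the
residual `u - p` lies in the polar cone, `‖p‖² = ⟪u, p⟫`, and `p` has nonnegative coefficients on
linearly independent rows (Carathéodory), which are therefore bounded by a multiple of `‖p‖`.
-/

open scoped RealInnerProductSpace
open Set Function Matrix Filter Topology

theorem le_of_sq_le_mul {x a : ℝ} (ha : 0 ≤ a) (h : x ^ 2 ≤ a * x) : x ≤ a := by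
  nlinarith

theorem le_sqrt_mul_sqrt_of_sq_le {x a y : ℝ} (ha : 0 ≤ a) (h : x ^ 2 ≤ a * y) : x ≤ √a * √y :=
  (le_abs_self x).trans ((Real.abs_le_sqrt h).trans_eq (Real.sqrt_mul ha y))

theorem sum_abs_add_le_mul_sqrt {κ : Type*} [Fintype κ] (v : κ → ℝ) {μ D L : ℝ} (hμ : 0 < μ)
    (hD : 0 ≤ D) (hDL : D ≤ L) :
    ∑ j, |v j| + D ≤ (√(Fintype.card κ / μ) + √L) * √(μ * ∑ j, v j ^ 2 + D) := by
  have hP : 0 ≤ μ * ∑ j, v j ^ 2 := by positivity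
  have h₁ : ∑ j, |v j| ≤ √(Fintype.card κ / μ) * √(μ * ∑ j, v j ^ 2 + D) := by
    refine le_sqrt_mul_sqrt_of_sq_le (by positivity) ?_
    calc (∑ j, |v j|) ^ 2 ≤ Fintype.card κ * ∑ j, v j ^ 2 := by
          simpa using sq_sum_le_card_mul_sum_sq (s := Finset.univ) (f := fun j => |v j|)
      _ ≤ Fintype.card κ / μ * (μ * ∑ j, v j ^ 2 + D) := by
          rw [div_mul_eq_mul_div, le_div_iff₀ hμ]
          nlinarith [Nat.cast_nonneg (α := ℝ) (Fintype.card κ)]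
  have h₂ : D ≤ √L * √(μ * ∑ j, v j ^ 2 + D) :=
    le_sqrt_mul_sqrt_of_sq_le (hD.trans hDL) (by nlinarith)
  linarith [add_mul √(Fintype.card κ / μ) √L √(μ * ∑ j, v j ^ 2 + D)]

theorem max_add_max_eq_of_abs_le {w l : ℝ} (h : |w| ≤ l) (s : ℝ) :
    max ((w + l) * s) 0 + max ((w - l) * s) 0 = w * s + l * |s| := by
  rw [abs_le] at h
  rcases le_total 0 s with hs | hs
  · rw [max_eq_left (by nlinarith), max_eq_right (by nlinarith), abs_of_nonneg hs]; ring
  · rw [max_eq_right (by nlinarith), max_eq_left (by nlinarith), abs_of_nonpos hs]; ring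

theorem exists_KL_half_of_error_bound {E : Type*} [NormedAddCommGroup E] [InnerProductSpace ℝ E]
    {F : E → ℝ} {xbar : E} (hmin : ∀ x, F xbar ≤ F x)
    (herr : ∃ C > 0, ∃ ε > 0, ∀ x, ‖x - xbar‖ ≤ ε →
      ∃ y, F y ≤ F xbar ∧ ‖x - y‖ ≤ C * √(F x - F xbar)) :
    ∃ c > (0 : ℝ), ∃ ε > (0 : ℝ), ∀ x, ‖x - xbar‖ ≤ ε → ∀ ξ : E,
      (∀ y, F x + ⟪ξ, y - x⟫ ≤ F y) → c * √(F x - F xbar) ≤ ‖ξ‖ := by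
  obtain ⟨C, hC, ε, hε, herr⟩ := herr
  refine ⟨C⁻¹, inv_pos.2 hC, ε, hε, fun x hx ξ hξ => ?_⟩
  obtain ⟨y, hy, hxy⟩ := herr x hx
  have hgap : 0 ≤ F x - F xbar := sub_nonneg.2 (hmin x)
  have hsub : F x - F xbar ≤ ‖ξ‖ * (C * √(F x - F xbar)) := calc
    F x - F xbar ≤ ⟪ξ, x - y⟫ := by
      have := hξ y
      rw [← neg_sub, inner_neg_right] at this
      linarith
    _ ≤ ‖ξ‖ * ‖x - y‖ := real_inner_le_norm _ _
    _ ≤ ‖ξ‖ * (C * √(F x - F xbar)) := by gcongr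
  rw [inv_mul_le_iff₀ hC]
  exact le_of_sq_le_mul (by positivity) (by rw [Real.sq_sqrt hgap]; linarith)

theorem ConvexOn.sum {𝕜 E β ι : Type*} [Semiring 𝕜] [PartialOrder 𝕜] [AddCommMonoid E]
    [AddCommMonoid β] [PartialOrder β] [IsOrderedAddMonoid β] [SMul 𝕜 E] [Module 𝕜 β]
    {s : Set E} (hs : Convex 𝕜 s) {t : Finset ι} {f : ι → E → β}
    (hf : ∀ i ∈ t, ConvexOn 𝕜 s (f i)) :
    ConvexOn 𝕜 s fun x => ∑ i ∈ t, f i x := by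
  classical
  induction t using Finset.induction_on with
  | empty => simpa using convexOn_const (0 : β) hs
  | insert i t hi ih =>
    simp_rw [Finset.sum_insert hi]
    exact (hf i (Finset.mem_insert_self i t)).add
      (ih fun j hj => hf j (Finset.mem_insert_of_mem hj))

theorem ConvexOn.nonneg_of_neg_mul_sq_le {φ : ℝ → ℝ} (hφ : ConvexOn ℝ univ φ) (h0 : φ 0 = 0) {K : ℝ}
    (hK : ∀ s, -(K * s ^ 2) ≤ φ s) (s : ℝ) : 0 ≤ φ s := by
  have hscaled : ∀ t ∈ Ioc (0 : ℝ) 1, -(K * s ^ 2) * t ≤ φ s := by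
    rintro t ⟨ht0, ht1⟩
    have hconv : φ (t * s) ≤ t * φ s := by
      simpa [h0] using
        hφ.2 (mem_univ s) (mem_univ 0) ht0.le (sub_nonneg.2 ht1) (add_sub_cancel t 1)
    refine le_of_mul_le_mul_left ?_ ht0
    calc t * (-(K * s ^ 2) * t) = -(K * (t * s) ^ 2) := by ring
      _ ≤ t * φ s := (hK _).trans hconv
  have hlim : Tendsto (fun t => -(K * s ^ 2) * t) (𝓝[>] 0) (𝓝 0) := by
    simpa using tendsto_nhdsWithin_of_tendsto_nhds ((continuous_const_mul (-(K * s ^ 2))).tendsto 0)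
  exact le_of_tendsto hlim (eventually_of_mem (Ioc_mem_nhdsGT one_pos) hscaled)

section Caratheodory

variable {ι E : Type*} [Fintype ι] [AddCommGroup E] [Module ℝ E] (a : ι → E)

theorem exists_nonneg_support_ssubset_of_not_linearIndepOn {c : ι → ℝ} (hc : 0 ≤ c)
    (hdep : ¬LinearIndepOn ℝ a (support c)) :
    ∃ c' : ι → ℝ, 0 ≤ c' ∧ support c' ⊂ support c ∧
      Fintype.linearCombination ℝ a c' = Fintype.linearCombination ℝ a c := by
  classical
  obtain ⟨l, hl, hla, hl0⟩ : ∃ l ∈ Finsupp.supported ℝ ℝ (support c),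
      Finsupp.linearCombination ℝ a l = 0 ∧ l ≠ 0 := by
    simpa [linearIndepOn_iff] using hdep
  wlog hpos : ∃ j, 0 < l j generalizing l
  · refine this (-l) (Submodule.neg_mem _ hl) (by simp [hla]) (neg_ne_zero.2 hl0) ?_
    push Not at hpos
    obtain ⟨j, hj⟩ := Finsupp.ne_iff.1 hl0
    exact ⟨j, by simpa using (hpos j).lt_of_ne hj⟩
  have hsupp : ∀ j, c j = 0 → l j = 0 := fun j hj =>
    (Finsupp.mem_supported' ℝ l).1 hl j (by simpa using hj)
  have hla' : Fintype.linearCombination ℝ a l = 0 := by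
    rwa [← Finsupp.linearCombination_eq_fintype_linearCombination_apply,
      Finsupp.linearEquivFunOnFinite_symm_coe]
  -- move from `c` along `-l` until a first coordinate of `c` reaches zero
  obtain ⟨j₀, hj₀, hmin⟩ := Finset.exists_min_image (Finset.univ.filter (0 < l ·))
    (fun j => c j / l j) (let ⟨j, hj⟩ := hpos; ⟨j, by simpa using hj⟩)
  have hlj₀ : 0 < l j₀ := (Finset.mem_filter.1 hj₀).2
  set τ := c j₀ / l j₀
  have hτ : 0 ≤ τ := div_nonneg (hc j₀) hlj₀.le
  refine ⟨c - τ • ⇑l, fun j => ?_, ?_, by simp [hla']⟩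
  · rcases lt_or_ge 0 (l j) with hj | hj
    · have := hmin j (by simpa using hj)
      rw [le_div_iff₀ hj] at this
      simpa using this
    · simpa using (mul_nonpos_of_nonneg_of_nonpos hτ hj).trans (hc j)
  · refine (ssubset_iff_of_subset fun j hj => ?_).2
      ⟨j₀, fun h0 => hlj₀.ne' (hsupp j₀ h0), by simp [τ, hlj₀.ne']⟩
    contrapose! hj
    simp [notMem_support.1 hj, hsupp j (notMem_support.1 hj)]

theorem exists_nonneg_linearIndepOn_support {c : ι → ℝ} (hc : 0 ≤ c) :
    ∃ c' : ι → ℝ, 0 ≤ c' ∧ LinearIndepOn ℝ a (support c') ∧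
      Fintype.linearCombination ℝ a c' = Fintype.linearCombination ℝ a c := by
  classical
  have hex : ∃ n, ∃ c' : ι → ℝ, 0 ≤ c' ∧
      Fintype.linearCombination ℝ a c' = Fintype.linearCombination ℝ a c ∧ (support c').ncard = n :=
    ⟨_, c, hc, rfl, rfl⟩
  obtain ⟨c', hc', hc'c, hcard⟩ := Nat.find_spec hex
  refine ⟨c', hc', by_contra fun hdep => ?_, hc'c⟩
  obtain ⟨c'', hc'', hss, hc''c'⟩ := exists_nonneg_support_ssubset_of_not_linearIndepOn a hc' hdep
  exact Nat.find_min hex (hcard ▸ ncard_lt_ncard hss) ⟨c'', hc'', hc''c'.trans hc'c, rfl⟩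

end Caratheodory

section BoundedCoefficients

variable {ι E : Type*} [Fintype ι] [NormedAddCommGroup E] [NormedSpace ℝ E] (a : ι → E)

theorem exists_norm_le_of_linearIndepOn {s : Set ι} (hs : LinearIndepOn ℝ a s) :
    ∃ K : ℝ, 0 ≤ K ∧ ∀ c : ι → ℝ, support c ⊆ s →
      ‖c‖ ≤ K * ‖Fintype.linearCombination ℝ a c‖ := by
  classical
  set f := Fintype.linearCombination ℝ (fun j : s => a j)
  obtain ⟨K, -, hK⟩ := f.exists_antilipschitzWith
    (LinearMap.ker_eq_bot.2 (linearIndependent_iff_injective_fintypeLinearCombination.1 hs))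
  refine ⟨K, K.2, fun c hc => ?_⟩
  have hfc : f (fun j => c j) = Fintype.linearCombination ℝ a c := by
    rw [Fintype.linearCombination_apply, Fintype.linearCombination_apply,
      ← Fintype.sum_subtype_add_sum_subtype (· ∈ s) (fun j => c j • a j),
      Fintype.sum_eq_zero (fun j : {j // j ∉ s} => c j • a j)
        (fun j => by simp [notMem_support.1 (mt (@hc j) j.2)]), add_zero]
  refine (pi_norm_le_iff_of_nonneg (by positivity)).2 fun j => ?_
  by_cases hj : j ∈ s
  · exact (norm_le_pi_norm (fun j : s => c j) ⟨j, hj⟩).trans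
      (hfc ▸ ZeroHomClass.bound_of_antilipschitz f hK _)
  · simp only [notMem_support.1 (mt (@hc j) hj), norm_zero]
    positivity

theorem exists_nonneg_coeffs_norm_le : ∃ B, 0 ≤ B ∧ ∀ c : ι → ℝ, 0 ≤ c → ∃ c' : ι → ℝ, 0 ≤ c' ∧
    Fintype.linearCombination ℝ a c' = Fintype.linearCombination ℝ a c ∧
    ‖c'‖ ≤ B * ‖Fintype.linearCombination ℝ a c‖ := by
  have : ∀ s : Set ι, ∃ K : ℝ, 0 ≤ K ∧ (LinearIndepOn ℝ a s → ∀ c : ι → ℝ, support c ⊆ s →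
      ‖c‖ ≤ K * ‖Fintype.linearCombination ℝ a c‖) := fun s => by
    by_cases hs : LinearIndepOn ℝ a s
    · obtain ⟨K, hK0, hK⟩ := exists_norm_le_of_linearIndepOn a hs
      exact ⟨K, hK0, fun _ => hK⟩
    · exact ⟨0, le_rfl, fun h => (hs h).elim⟩
  choose K hK0 hK using this
  obtain ⟨B, hB⟩ := Finite.exists_le K
  refine ⟨B, (hK0 ∅).trans (hB ∅), fun c hc => ?_⟩
  obtain ⟨c', hc', hli, hc'c⟩ := exists_nonneg_linearIndepOn_support a hc
  refine ⟨c', hc', hc'c, ?_⟩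
  calc ‖c'‖ ≤ K _ * ‖Fintype.linearCombination ℝ a c'‖ := hK _ hli c' subset_rfl
    _ ≤ B * ‖Fintype.linearCombination ℝ a c‖ := by rw [hc'c]; gcongr; exact hB _

theorem isClosed_image_linearCombination_Ici :
    IsClosed (Fintype.linearCombination ℝ a '' Ici 0) := by
  obtain ⟨B, hB0, hB⟩ := exists_nonneg_coeffs_norm_le a
  set L := Fintype.linearCombination ℝ a
  refine isClosed_of_closure_subset fun y hy => ?_
  have hK : IsCompact (L '' (Ici 0 ∩ Metric.closedBall 0 (B * (‖y‖ + 1)))) :=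
    ((isCompact_closedBall _ _).inter_left isClosed_Ici).image L.continuous_of_finiteDimensional
  have hsub :
      Metric.ball y 1 ∩ L '' Ici 0 ⊆ L '' (Ici 0 ∩ Metric.closedBall 0 (B * (‖y‖ + 1))) := by
    rintro _ ⟨hyc, c, hc, rfl⟩
    obtain ⟨c', hc', hc'c, hnorm⟩ := hB c hc
    refine ⟨c', ⟨hc', mem_closedBall_zero_iff.2 (hnorm.trans ?_)⟩, hc'c⟩
    have := mem_ball_iff_norm.1 hyc
    have := norm_le_norm_add_norm_sub' (L c) y
    gcongr
    linarith
  exact image_mono inter_subset_left <| hK.isClosed.closure_subset_iff.2 hsub <|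
    Metric.isOpen_ball.inter_closure ⟨Metric.mem_ball_self one_pos, hy⟩

end BoundedCoefficients

section Hoffman

variable {ι E : Type*} [Fintype ι] [NormedAddCommGroup E] [InnerProductSpace ℝ E] [CompleteSpace E]
  (a : ι → E)

theorem exists_nonneg_sub_linearCombination_mem_polar (u : E) :
    ∃ c : ι → ℝ, 0 ≤ c ∧ (∀ j, ⟪a j, u - Fintype.linearCombination ℝ a c⟫ ≤ 0) ∧
      ⟪u - Fintype.linearCombination ℝ a c, Fintype.linearCombination ℝ a c⟫ = 0 := by
  classical
  set L := Fintype.linearCombination ℝ a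
  have hconv : Convex ℝ (L '' Ici 0) := (convex_Ici 0).linear_image L
  obtain ⟨y, hy, hproj⟩ := exists_norm_eq_iInf_of_complete_convex (K := L '' Ici 0)
    ⟨0, 0, mem_Ici.2 le_rfl, map_zero L⟩
    (isClosed_image_linearCombination_Ici a).isComplete hconv u
  have hvar := (norm_eq_iInf_iff_real_inner_le_zero hconv hy).1 hproj
  obtain ⟨c, hc, rfl⟩ := hy
  refine ⟨c, hc, fun j => ?_, ?_⟩
  · have := hvar (L (c + Pi.single j 1))
      ⟨_, mem_Ici.2 (add_nonneg hc (Pi.single_nonneg.2 zero_le_one)), rfl⟩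
    rwa [map_add, add_sub_cancel_left, Fintype.linearCombination_apply_single, one_smul,
      real_inner_comm] at this
  · have h0 := hvar 0 ⟨0, mem_Ici.2 le_rfl, map_zero L⟩
    have h2 := hvar (L ((2 : ℝ) • c)) ⟨_, mem_Ici.2 (smul_nonneg zero_le_two hc), rfl⟩
    rw [map_smul, two_smul, add_sub_cancel_right] at h2
    rw [zero_sub, inner_neg_right] at h0
    linarith

theorem exists_mem_polar_norm_sub_le :
    ∃ C, 0 ≤ C ∧ ∀ u : E, ∃ k, (∀ j, ⟪a j, k⟫ ≤ 0) ∧ ‖u - k‖ ≤ ‖u‖ ∧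
      ‖u - k‖ ≤ C * ∑ j, max ⟪a j, u⟫ 0 := by
  obtain ⟨B, hB0, hB⟩ := exists_nonneg_coeffs_norm_le a
  refine ⟨B, hB0, fun u => ?_⟩
  set L := Fintype.linearCombination ℝ a
  obtain ⟨c, hc, hpolar, horth⟩ := exists_nonneg_sub_linearCombination_mem_polar a u
  have hsq : ‖L c‖ ^ 2 = ⟪u, L c⟫ := by
    rw [← real_inner_self_eq_norm_sq]
    rw [inner_sub_left] at horth
    linarith
  obtain ⟨c', hc', hc'c, hnorm⟩ := hB c hc
  have hviol : 0 ≤ ∑ j, max ⟪a j, u⟫ 0 := Finset.sum_nonneg fun j _ => le_max_right _ _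
  have hbound : ⟪u, L c⟫ ≤ B * ‖L c‖ * ∑ j, max ⟪a j, u⟫ 0 := calc
    ⟪u, L c⟫ = ∑ j, c' j * ⟪a j, u⟫ := by
      simp [L, ← hc'c, Fintype.linearCombination_apply, inner_sum, real_inner_smul_right,
        real_inner_comm]
    _ ≤ ∑ j, ‖c'‖ * max ⟪a j, u⟫ 0 := Finset.sum_le_sum fun j _ =>
      (mul_le_mul_of_nonneg_left (le_max_left _ _) (hc' j)).trans <|
        mul_le_mul_of_nonneg_right ((le_abs_self _).trans (norm_le_pi_norm c' j))
          (le_max_right _ _)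
    _ ≤ B * ‖L c‖ * ∑ j, max ⟪a j, u⟫ 0 := by rw [← Finset.mul_sum]; gcongr
  refine ⟨u - L c, hpolar, ?_, ?_⟩ <;> rw [sub_sub_cancel]
  · exact le_of_sq_le_mul (norm_nonneg u) (hsq ▸ real_inner_le_norm u (L c))
  · exact le_of_sq_le_mul (mul_nonneg hB0 hviol) (by linarith)

end Hoffman

section Matrix

variable {k m n : Type*} [Fintype n]

theorem Matrix.inner_toLp_row (M : Matrix m n ℝ) (l : m) (v : EuclideanSpace ℝ n) :
    ⟪WithLp.toLp 2 (M l), v⟫ = (M *ᵥ v) l := by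
  simp [PiLp.inner_apply, mulVec, dotProduct, mul_comm]

theorem Matrix.fromRows_neg_mulVec_nonpos_iff (A : Matrix k n ℝ) (S : Matrix m n ℝ) (v : n → ℝ) :
    fromRows (fromRows A (-A)) S *ᵥ v ≤ 0 ↔ A *ᵥ v = 0 ∧ S *ᵥ v ≤ 0 := by
  simp only [fromRows_mulVec, neg_mulVec, Pi.le_def, Sum.forall, Sum.elim_inl, Sum.elim_inr,
    Pi.neg_apply, Pi.zero_apply, neg_nonpos, funext_iff, le_antisymm_iff (b := (0 : ℝ)),
    forall_and]

variable [Fintype m]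

theorem Matrix.exists_mulVec_nonpos_norm_sub_le (M : Matrix m n ℝ) :
    ∃ C, 0 ≤ C ∧ ∀ u : EuclideanSpace ℝ n, ∃ k : EuclideanSpace ℝ n, M *ᵥ k ≤ 0 ∧
      ‖u - k‖ ≤ ‖u‖ ∧ ‖u - k‖ ≤ C * ∑ l, max ((M *ᵥ u) l) 0 := by
  obtain ⟨C, hC, h⟩ := exists_mem_polar_norm_sub_le fun l => WithLp.toLp 2 (M l)
  refine ⟨C, hC, fun u => ?_⟩
  obtain ⟨k, hk, hku⟩ := h u
  simp only [inner_toLp_row] at hk hku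
  exact ⟨k, hk, hku⟩

theorem Matrix.sum_max_mulVec_le (M : Matrix m n ℝ) (u : EuclideanSpace ℝ n) :
    ∑ l, max ((M *ᵥ u) l) 0 ≤ (∑ l, ‖WithLp.toLp 2 (M l)‖) * ‖u‖ := by
  rw [Finset.sum_mul]
  refine Finset.sum_le_sum fun l _ => max_le ?_ (by positivity)
  rw [← inner_toLp_row]
  exact real_inner_le_norm _ _

theorem Matrix.sum_max_fromRows_neg_mulVec [Fintype k] (A : Matrix k n ℝ) (S : Matrix m n ℝ)
    (v : n → ℝ) :
    ∑ l, max ((fromRows (fromRows A (-A)) S *ᵥ v) l) 0 =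
      ∑ j, |(A *ᵥ v) j| + ∑ l, max ((S *ᵥ v) l) 0 := by
  simp [fromRows_mulVec, Fintype.sum_sum_type, neg_mulVec, ← Finset.sum_add_distrib,
    max_zero_add_max_neg_zero_eq_abs_self]

end Matrix

section Lasso

variable {ι κ : Type*} [Fintype ι] [Fintype κ] (A : Matrix κ ι ℝ) (b : κ → ℝ) (μ lam : ℝ)

def lasso (x : EuclideanSpace ℝ ι) : ℝ :=
  μ * ∑ j, ((A *ᵥ x) j - b j) ^ 2 + lam * ∑ i, |x i|

def lassoGrad (xbar : EuclideanSpace ℝ ι) : ι → ℝ := (2 * μ) • ((A *ᵥ xbar - b) ᵥ* A)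

def lassoCoordIncr (xbar : EuclideanSpace ℝ ι) (i : ι) (s : ℝ) : ℝ :=
  lassoGrad A b μ xbar i * s + lam * (|xbar i + s| - |xbar i|)

/-- At a coordinate with `xbar i = 0` its two rows say `(w i + lam) * k i ≤ 0` and
`(w i - lam) * k i ≤ 0`, i.e. `w i * k i + lam * |k i| ≤ 0`, where `w = lassoGrad A b μ xbar`. -/
noncomputable def lassoSignMatrix [DecidableEq ι] (xbar : EuclideanSpace ℝ ι) :
    Matrix (ι ⊕ ι) ι ℝ :=
  fromRows (diagonal fun i => if xbar i = 0 then lassoGrad A b μ xbar i + lam else 0)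
    (diagonal fun i => if xbar i = 0 then lassoGrad A b μ xbar i - lam else 0)

theorem convexOn_lasso (hμ : 0 ≤ μ) (hlam : 0 ≤ lam) : ConvexOn ℝ univ (lasso A b μ lam) := by
  have hsq : ∀ j, ConvexOn ℝ univ fun x : EuclideanSpace ℝ ι => ((A *ᵥ x) j - b j) ^ 2 := fun j =>
    let ℓ : EuclideanSpace ℝ ι →ₗ[ℝ] ℝ :=
      LinearMap.proj j ∘ₗ A.mulVecLin ∘ₗ (WithLp.linearEquiv 2 ℝ (ι → ℝ)).toLinearMap
    (Even.convexOn_pow even_two).comp_affineMap (ℓ.toAffineMap - AffineMap.const ℝ _ (b j))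
  have habs : ∀ i, ConvexOn ℝ univ fun x : EuclideanSpace ℝ ι => |x i| := fun i =>
    (convexOn_norm convex_univ).comp_linearMap (EuclideanSpace.proj i).toLinearMap
  exact ((ConvexOn.sum convex_univ fun j _ => hsq j).smul hμ).add
    ((ConvexOn.sum convex_univ fun i _ => habs i).smul hlam)

theorem convexOn_lassoCoordIncr (hlam : 0 ≤ lam) (xbar : EuclideanSpace ℝ ι) (i : ι) :
    ConvexOn ℝ univ (lassoCoordIncr A b μ lam xbar i) := by
  have hlin := (LinearMap.mulLeft ℝ (lassoGrad A b μ xbar i)).convexOn convex_univ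
  have habs : ConvexOn ℝ univ fun s : ℝ => |xbar i + s| := by
    simpa [Function.comp_def] using (convexOn_norm convex_univ).translate_right (xbar i)
  refine ((hlin.add (habs.smul hlam)).add_const (-(lam * |xbar i|))).congr fun s _ => ?_
  simp only [lassoCoordIncr, LinearMap.mulLeft_apply, Pi.add_apply, smul_eq_mul]
  ring

theorem lasso_add_sub (xbar u : EuclideanSpace ℝ ι) :
    lasso A b μ lam (xbar + u) - lasso A b μ lam xbar =
      μ * ∑ j, (A *ᵥ u) j ^ 2 + ∑ i, lassoCoordIncr A b μ lam xbar i (u i) := by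
  have hgrad : ∑ i, lassoGrad A b μ xbar i * u i = 2 * μ * ∑ j, (A *ᵥ xbar - b) j * (A *ᵥ u) j := by
    have := dotProduct_mulVec (A *ᵥ xbar - b) A u
    simp only [dotProduct] at this
    simp only [lassoGrad, Pi.smul_apply, smul_eq_mul, mul_assoc, ← Finset.mul_sum, this]
  have hsq : ∀ j, ((A *ᵥ xbar) j + (A *ᵥ u) j - b j) ^ 2 = ((A *ᵥ xbar) j - b j) ^ 2 +
      2 * ((A *ᵥ xbar - b) j * (A *ᵥ u) j) + (A *ᵥ u) j ^ 2 := fun j => by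
    rw [Pi.sub_apply]; ring
  simp only [lasso, lassoCoordIncr, WithLp.ofLp_add, mulVec_add, Pi.add_apply, hsq,
    Finset.sum_add_distrib, hgrad, ← Finset.mul_sum, Finset.sum_sub_distrib]
  ring

variable {A b μ lam}

theorem lassoCoordIncr_nonneg (hlam : 0 ≤ lam) {xbar : EuclideanSpace ℝ ι}
    (hmin : ∀ x, lasso A b μ lam xbar ≤ lasso A b μ lam x) (i : ι) (s : ℝ) :
    0 ≤ lassoCoordIncr A b μ lam xbar i s := by
  classical
  refine (convexOn_lassoCoordIncr A b μ lam hlam xbar i).nonneg_of_neg_mul_sq_le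
    (by simp [lassoCoordIncr]) (K := μ * ∑ j, A j i ^ 2) (fun s => ?_) s
  have h := lasso_add_sub A b μ lam xbar (EuclideanSpace.single i s)
  have hsum : ∑ i', lassoCoordIncr A b μ lam xbar i' (EuclideanSpace.single i s i') =
      lassoCoordIncr A b μ lam xbar i s :=
    (Fintype.sum_eq_single i fun i' hi' => by simp [hi', lassoCoordIncr]).trans (by simp)
  have hquad : μ * ∑ j, (A *ᵥ EuclideanSpace.single i s) j ^ 2 = μ * (∑ j, A j i ^ 2) * s ^ 2 := by
    simp [mulVec_single, mul_pow, Finset.sum_mul, mul_assoc]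
  linarith [hmin (xbar + EuclideanSpace.single i s)]

theorem abs_lassoGrad_le (hlam : 0 ≤ lam) {xbar : EuclideanSpace ℝ ι}
    (hmin : ∀ x, lasso A b μ lam xbar ≤ lasso A b μ lam x) {i : ι} (hi : xbar i = 0) :
    |lassoGrad A b μ xbar i| ≤ lam := by
  have h₁ := lassoCoordIncr_nonneg hlam hmin i 1
  have h₂ := lassoCoordIncr_nonneg hlam hmin i (-1)
  simp only [lassoCoordIncr, hi] at h₁ h₂
  norm_num at h₁ h₂
  exact abs_le.2 ⟨by linarith, by linarith⟩

theorem lassoCoordIncr_eq_zero (hlam : 0 ≤ lam) {xbar : EuclideanSpace ℝ ι}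
    (hmin : ∀ x, lasso A b μ lam xbar ≤ lasso A b μ lam x) {i : ι} {s : ℝ} (hs : |s| ≤ |xbar i|) :
    lassoCoordIncr A b μ lam xbar i s = 0 := by
  have h₁ := lassoCoordIncr_nonneg hlam hmin i s
  have h₂ := lassoCoordIncr_nonneg hlam hmin i (-s)
  have habs : |xbar i + s| + |xbar i - s| ≤ 2 * |xbar i| := by grind
  simp only [lassoCoordIncr, ← sub_eq_add_neg] at h₁ h₂ ⊢
  nlinarith

theorem exists_lasso_add_sub_eq_of_norm_le [DecidableEq ι] (hlam : 0 ≤ lam)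
    {xbar : EuclideanSpace ℝ ι} (hmin : ∀ x, lasso A b μ lam xbar ≤ lasso A b μ lam x) :
    ∃ r > 0, ∀ u : EuclideanSpace ℝ ι, ‖u‖ ≤ r →
      lasso A b μ lam (xbar + u) - lasso A b μ lam xbar =
        μ * ∑ j, (A *ᵥ u) j ^ 2 + ∑ l, max ((lassoSignMatrix A b μ lam xbar *ᵥ u) l) 0 := by
  obtain ⟨⟨r, hr⟩, hrle⟩ := Finite.exists_ge (α := Ioi (0 : ℝ)) fun i =>
    ⟨if xbar i = 0 then 1 else |xbar i|, by
      split_ifs with h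
      exacts [mem_Ioi.2 one_pos, mem_Ioi.2 (abs_pos.2 h)]⟩
  refine ⟨r, hr, fun u hu => ?_⟩
  rw [lasso_add_sub, lassoSignMatrix, fromRows_mulVec, Fintype.sum_sum_type,
    ← Finset.sum_add_distrib]
  congr 1
  refine Finset.sum_congr rfl fun i _ => ?_
  by_cases hi : xbar i = 0
  · simp only [Sum.elim_inl, Sum.elim_inr, mulVec_diagonal, hi, if_true,
      max_add_max_eq_of_abs_le (abs_lassoGrad_le hlam hmin hi)]
    simp [lassoCoordIncr, hi]
  · have hui : |u i| ≤ |xbar i| := by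
      simpa [hi] using (PiLp.norm_apply_le u i).trans (hu.trans (hrle i))
    simp [mulVec_diagonal, hi, lassoCoordIncr_eq_zero hlam hmin hui]

theorem lasso_local_error_bound (hμ : 0 < μ) (hlam : 0 ≤ lam)
    {xbar : EuclideanSpace ℝ ι} (hmin : ∀ x, lasso A b μ lam xbar ≤ lasso A b μ lam x) :
    ∃ C > 0, ∃ ε > 0, ∀ x, ‖x - xbar‖ ≤ ε → ∃ y, lasso A b μ lam y ≤ lasso A b μ lam xbar ∧
      ‖x - y‖ ≤ C * √(lasso A b μ lam x - lasso A b μ lam xbar) := by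
  classical
  obtain ⟨r, hr, hloc⟩ := exists_lasso_add_sub_eq_of_norm_le hlam hmin
  set S := lassoSignMatrix A b μ lam xbar
  obtain ⟨CH, hCH, hoff⟩ := (fromRows (fromRows A (-A)) S).exists_mulVec_nonpos_norm_sub_le
  set LS := ∑ l, ‖WithLp.toLp 2 (S l)‖
  refine ⟨CH * (√(Fintype.card κ / μ) + √(LS * (r / 2))) + 1, by positivity, r / 2, by positivity,
    fun x hx => ?_⟩
  obtain ⟨k, hk, hku, hkC⟩ := hoff (x - xbar)
  obtain ⟨hAk, hSk⟩ := (fromRows_neg_mulVec_nonpos_iff A S k).1 hk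
  refine ⟨xbar + k, le_of_eq ?_, ?_⟩
  · have hkr : ‖k‖ ≤ r := calc
      ‖k‖ = ‖(x - xbar) - (x - xbar - k)‖ := by rw [sub_sub_cancel]
      _ ≤ ‖x - xbar‖ + ‖x - xbar - k‖ := norm_sub_le _ _
      _ ≤ r := by linarith
    have hD0 : ∑ l, max ((S *ᵥ k) l) 0 = 0 := Finset.sum_eq_zero fun l _ => max_eq_right (hSk l)
    have := hloc k hkr
    rw [hD0, hAk] at this
    simpa [sub_eq_zero] using this
  · have hxr : ‖x - xbar‖ ≤ r := hx.trans (half_le_self hr.le)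
    have hgap := hloc (x - xbar) hxr
    rw [add_sub_cancel] at hgap
    have hD : ∑ l, max ((S *ᵥ (x - xbar).ofLp) l) 0 ≤ LS * (r / 2) :=
      (S.sum_max_mulVec_le _).trans
        (mul_le_mul_of_nonneg_left hx (Finset.sum_nonneg fun _ _ => norm_nonneg _))
    have hviol := sum_abs_add_le_mul_sqrt (A *ᵥ (x - xbar).ofLp) hμ
      (Finset.sum_nonneg fun l _ => le_max_right _ 0) hD
    rw [← hgap] at hviol
    rw [sum_max_fromRows_neg_mulVec] at hkC
    calc ‖x - (xbar + k)‖ = ‖x - xbar - k‖ := by rw [sub_add_eq_sub_sub]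
      _ ≤ CH * ((√(Fintype.card κ / μ) + √(LS * (r / 2))) *
          √(lasso A b μ lam x - lasso A b μ lam xbar)) := hkC.trans (by gcongr)
      _ ≤ _ := by
        rw [← mul_assoc, add_mul, one_mul]
        exact le_add_of_nonneg_right (Real.sqrt_nonneg _)

end Lasso

/-- The Lasso objective `F(x) = μ‖Ax − b‖² + λ‖x‖₁` is convex and
satisfies the KL inequality with exponent `1/2` around every global minimizer. -/
theorem lasso_KL_exponent_half
    (m n : ℕ) (A : Matrix (Fin m) (Fin n) ℝ) (b : Fin m → ℝ)
    (μ lam : ℝ) (hμ : 0 < μ) (hlam : 0 < lam) :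
    let F : EuclideanSpace ℝ (Fin n) → ℝ :=
      fun x => μ * ∑ j, (A.mulVec x j - b j) ^ 2 + lam * ∑ i, |x i|
    ConvexOn ℝ Set.univ F ∧
    ∀ xbar : EuclideanSpace ℝ (Fin n), (∀ x, F xbar ≤ F x) →
      ∃ c > (0 : ℝ), ∃ ε > (0 : ℝ),
        ∀ x : EuclideanSpace ℝ (Fin n), ‖x - xbar‖ ≤ ε →
          ∀ ξ : EuclideanSpace ℝ (Fin n),
            (∀ y : EuclideanSpace ℝ (Fin n), F x + ⟪ξ, y - x⟫ ≤ F y) →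
            c * Real.sqrt (F x - F xbar) ≤ ‖ξ‖ :=
  ⟨convexOn_lasso A b μ lam hμ.le hlam.le, fun _ hmin =>
    exists_KL_half_of_error_bound hmin (lasso_local_error_bound hμ hlam.le hmin)⟩
end

section
/- Let A be a real m × n matrix, b ∈ ℝ^m, μ > 0 and λ > 0, let 𝒢 be a partition of {1, …, n}, and define the group Lasso objective F : ℝ^n → ℝ by F(x) := μ‖Ax − b‖² + λ·Σ_{g∈𝒢} ‖x_g‖, where x_g is the subvector of x indexed by g. Assume inf_{x∈ℝ^n} F(x) > inf_{x∈ℝ^n} μ‖Ax − b‖². Then F is convex, and for every global minimizer x̄ of F there exist constants c > 0 and ε > 0 such that for every x ∈ ℝ^n with ‖x − x̄‖ ≤ ε and every ξ ∈ ℝ^n satisfying the subgradient inequality F(y) ≥ F(x) + ⟨ξ, y − x⟩ for all y ∈ ℝ^n, one has ‖ξ‖ ≥ c·(F(x) − F(x̄))^{1/2}. -/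
/-
Write `F = μ‖T · - b‖² + R` with `R` the group norm and `g₀` the gradient of the smooth part at a
minimizer `x₀`. Then `F y - F x₀ = μ‖T (y - x₀)‖² + D y`, where the gap
`D y = Σ_g (λ‖y_g‖ + ⟪g₀_g, y_g⟫)` is nonnegative by first-order optimality, group by group.
The KL inequality with exponent `1/2` follows from a local error bound
`dist(x, argmin F) ≤ β √(F x - F x₀)`, via the subgradient inequality at the nearest minimizer.

For the error bound, project `x` group-wise onto the zero set `Z` of `D` (a product of rays and
points): the squared distance is at most a constant times `D x`. Near `x₀`, `Z - x₀` coincides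
with a polyhedral cone, so Hoffman's lemma for that cone moves the projection into
`Z ∩ {T z = T x₀} = argmin F` at a cost linear in `‖T(p - x₀)‖ = O(√(F x - F x₀))`.
-/

open scoped RealInnerProductSpace
open Filter Topology

section NormGap

variable {E : Type*} [NormedAddCommGroup E] [InnerProductSpace ℝ E]

def normGap (lam : ℝ) (γ u : E) : ℝ := lam * ‖u‖ + ⟪γ, u⟫

lemma sub_norm_mul_norm_le_normGap (lam : ℝ) (γ u : E) :
    (lam - ‖γ‖) * ‖u‖ ≤ normGap lam γ u := by
  have := neg_le_of_abs_le (abs_real_inner_le_norm γ u)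
  unfold normGap
  linarith

lemma normGap_nonneg {lam : ℝ} {γ : E} (hγ : ‖γ‖ ≤ lam) (u : E) : 0 ≤ normGap lam γ u :=
  (mul_nonneg (sub_nonneg.2 hγ) (norm_nonneg u)).trans (sub_norm_mul_norm_le_normGap lam γ u)

lemma eq_zero_of_normGap_eq_zero {lam : ℝ} {γ u : E} (hγ : ‖γ‖ < lam)
    (h : normGap lam γ u = 0) : u = 0 := by
  have := sub_norm_mul_norm_le_normGap lam γ u
  rw [h] at this
  exact norm_le_zero_iff.1 (nonpos_of_mul_nonpos_right this (sub_pos.2 hγ))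

/-- Equality case of Cauchy–Schwarz. -/
lemma eq_smul_of_normGap_eq_zero {lam : ℝ} {γ u : E} (hlam : 0 < lam) (hγ : ‖γ‖ = lam)
    (h : normGap lam γ u = 0) : u = -(‖u‖ / lam) • γ := by
  have hinner : ⟪γ, u⟫ = -(lam * ‖u‖) := by unfold normGap at h; linarith
  have hsq : ‖u - -(‖u‖ / lam) • γ‖ ^ 2 = 0 := by
    rw [norm_sub_sq_real, real_inner_smul_right, real_inner_comm, hinner, norm_smul,
      Real.norm_eq_abs, hγ, abs_neg, abs_div, abs_norm, abs_of_pos hlam]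
    field_simp
    ring
  rw [← sub_eq_zero, ← norm_eq_zero]
  exact pow_eq_zero_iff two_ne_zero |>.1 hsq

lemma normGap_smul_self_eq_zero {lam s : ℝ} {γ : E} (hγ : ‖γ‖ = lam) (hs : s ≤ 0) :
    normGap lam γ (s • γ) = 0 := by
  rw [normGap, norm_smul, real_inner_smul_right, real_inner_self_eq_norm_sq, hγ,
    Real.norm_eq_abs, abs_of_nonpos hs]
  ring

lemma norm_le_and_normGap_eq_zero {lam : ℝ} {γ a : E} (hlam : 0 ≤ lam)
    (h₀ : normGap lam γ a ≤ normGap lam γ 0) (hγ : normGap lam γ a ≤ normGap lam γ (a - γ)) :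
    ‖γ‖ ≤ lam ∧ normGap lam γ a = 0 := by
  have hle : ‖γ‖ ≤ lam := by
    have htri : ‖a - γ‖ ≤ ‖a‖ + ‖γ‖ := norm_sub_le a γ
    simp only [normGap, inner_sub_right, real_inner_self_eq_norm_sq] at hγ
    nlinarith [norm_nonneg γ]
  refine ⟨hle, le_antisymm ?_ (normGap_nonneg hle a)⟩
  simpa [normGap] using h₀

lemma exists_sq_norm_sub_smul_le_normGap_of_norm_eq {lam M : ℝ} {γ u : E} (hlam : 0 < lam)
    (hγ : ‖γ‖ = lam) (hu : ‖u‖ ≤ M) :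
    ∃ s : ℝ, s ≤ 0 ∧ ‖u - s • γ‖ ^ 2 ≤ 2 * M / lam * normGap lam γ u := by
  set c := ⟪γ, u⟫ / lam
  have hc : |c| ≤ ‖u‖ := by
    rw [abs_div, abs_of_pos hlam, div_le_iff₀ hlam, ← hγ, mul_comm]
    exact abs_real_inner_le_norm γ u
  have hgap : normGap lam γ u = lam * (‖u‖ + c) := by
    simp only [normGap, c]; field_simp
  refine ⟨min c 0 / lam, div_nonpos_of_nonpos_of_nonneg (min_le_right _ _) hlam.le, ?_⟩
  rw [hgap, norm_sub_sq_real, real_inner_smul_right, real_inner_comm, norm_smul, mul_pow,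
    Real.norm_eq_abs, sq_abs, hγ, show ⟪γ, u⟫ = c * lam by simp only [c]; field_simp]
  rcases le_total c 0 with hc0 | hc0
  · rw [min_eq_left hc0]
    field_simp
    nlinarith [abs_of_nonpos hc0, norm_nonneg u]
  · rw [min_eq_right hc0]
    field_simp
    nlinarith [norm_nonneg u]

lemma exists_sq_norm_sub_smul_le_normGap {lam : ℝ} {γ : E} (hlam : 0 < lam) (hγ : ‖γ‖ ≤ lam)
    (M : ℝ) : ∃ K ≥ 0, ∀ u : E, ‖u‖ ≤ M →
      ∃ s : ℝ, normGap lam γ (s • γ) = 0 ∧ ‖u - s • γ‖ ^ 2 ≤ K * normGap lam γ u := by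
  rcases hγ.eq_or_lt with heq | hlt
  · refine ⟨2 * max M 0 / lam, by positivity, fun u hu => ?_⟩
    obtain ⟨s, hs, hbound⟩ := exists_sq_norm_sub_smul_le_normGap_of_norm_eq hlam heq
      (hu.trans (le_max_left M 0))
    exact ⟨s, normGap_smul_self_eq_zero heq hs, hbound⟩
  · refine ⟨max M 0 / (lam - ‖γ‖), div_nonneg (le_max_right _ _) (sub_pos.2 hlt).le,
      fun u hu => ⟨0, by simp [normGap], ?_⟩⟩
    have hu' : ‖u‖ ≤ max M 0 := hu.trans (le_max_left M 0)
    have := sub_norm_mul_norm_le_normGap lam γ u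
    have hgap := normGap_nonneg hγ u
    rw [zero_smul, sub_zero, div_mul_eq_mul_div, le_div_iff₀ (sub_pos.2 hlt)]
    nlinarith [mul_le_mul_of_nonneg_left this (norm_nonneg u),
      mul_le_mul_of_nonneg_right hu' hgap]

end NormGap

section Hoffman

variable {E F : Type*} [NormedAddCommGroup E] [NormedSpace ℝ E]
  [NormedAddCommGroup F] [NormedSpace ℝ F]

def HoffmanBound (T : E →L[ℝ] F) (C : Set E) (κ : ℝ) : Prop :=
  ∀ v ∈ C, ∃ k ∈ C, T k = 0 ∧ ‖v - k‖ ≤ κ * ‖T v‖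

variable {T : E →L[ℝ] F} {C : Set E}

lemma exists_norm_eq_one_of_not_hoffmanBound {κ : ℝ}
    (hC : ∀ c : ℝ, 0 ≤ c → ∀ v ∈ C, c • v ∈ C) (h : ¬HoffmanBound T C κ) :
    ∃ u ∈ C, ‖u‖ = 1 ∧ ∀ k ∈ C, T k = 0 → κ * ‖T u‖ < ‖u - k‖ := by
  simp only [HoffmanBound, not_forall, not_exists, not_and, not_le] at h
  obtain ⟨v, hv, hbad⟩ := h
  have hv0 : v ≠ 0 := by
    rintro rfl
    simpa using hbad 0 (by simpa using hC 0 le_rfl 0 hv) (map_zero T)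
  have hnv : 0 < ‖v‖ := norm_pos_iff.2 hv0
  refine ⟨‖v‖⁻¹ • v, hC _ (inv_nonneg.2 hnv.le) v hv, norm_smul_inv_norm hv0, fun k hk hTk => ?_⟩
  have hv' := hbad (‖v‖ • k) (hC _ hnv.le k hk) (by rw [map_smul, hTk, smul_zero])
  have hrw : v - ‖v‖ • k = ‖v‖ • (‖v‖⁻¹ • v - k) := by
    rw [smul_sub, smul_inv_smul₀ hnv.ne']
  rw [hrw, norm_smul, norm_norm] at hv'
  rw [map_smul, norm_smul, norm_inv, norm_norm]
  calc κ * (‖v‖⁻¹ * ‖T v‖) = ‖v‖⁻¹ * (κ * ‖T v‖) := by ring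
    _ < ‖v‖⁻¹ * (‖v‖ * ‖‖v‖⁻¹ • v - k‖) := by gcongr
    _ = ‖‖v‖⁻¹ • v - k‖ := by field_simp

/-- The compactness step of Hoffman's lemma. -/
lemma exists_tendsto_of_forall_not_hoffmanBound [FiniteDimensional ℝ E] (hCc : IsClosed C)
    (hC : ∀ c : ℝ, 0 ≤ c → ∀ v ∈ C, c • v ∈ C) (h : ∀ κ ≥ 0, ¬HoffmanBound T C κ) :
    ∃ w ∈ C, ‖w‖ = 1 ∧ T w = 0 ∧ ∃ u : ℕ → E, Tendsto u atTop (𝓝 w) ∧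
      ∀ κ, ∀ᶠ j in atTop, u j ∈ C ∧ ∀ k ∈ C, T k = 0 → κ * ‖T (u j)‖ < ‖u j - k‖ := by
  choose u huC hu1 hbad using fun j : ℕ =>
    exists_norm_eq_one_of_not_hoffmanBound hC (h (j + 1) (by positivity))
  have h0 : (0 : E) ∈ C := by simpa using hC 0 le_rfl _ (huC 0)
  have hTu : Tendsto (fun j => T (u j)) atTop (𝓝 0) := by
    refine tendsto_zero_iff_norm_tendsto_zero.2 <|
      squeeze_zero (fun _ => norm_nonneg _) (fun j => ?_) tendsto_one_div_add_atTop_nhds_zero_nat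
    have := hbad j 0 h0 (map_zero T)
    rw [sub_zero, hu1, ← lt_div_iff₀' (by positivity)] at this
    exact this.le
  obtain ⟨w, hw, ψ, hψ, hlim⟩ := (isCompact_sphere (0 : E) 1).tendsto_subseq
    (x := u) fun j => mem_sphere_zero_iff_norm.2 (hu1 j)
  refine ⟨w, hCc.mem_of_tendsto hlim (Eventually.of_forall fun j => huC _),
    mem_sphere_zero_iff_norm.1 hw,
    tendsto_nhds_unique ((T.continuous.tendsto w).comp hlim) (hTu.comp hψ.tendsto_atTop),
    u ∘ ψ, hlim, fun κ => ?_⟩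
  filter_upwards [hψ.tendsto_atTop.eventually_ge_atTop ⌈κ⌉₊] with j hj
  refine ⟨huC _, fun k hk hTk => lt_of_le_of_lt ?_ (hbad (ψ j) k hk hTk)⟩
  have : κ ≤ (ψ j : ℝ) + 1 := by
    have := (Nat.ceil_le.1 hj)
    linarith
  exact mul_le_mul_of_nonneg_right this (norm_nonneg _)

end Hoffman

section PolyCone

variable {E F ι : Type*} [NormedAddCommGroup E] [InnerProductSpace ℝ E]
  [NormedAddCommGroup F] [NormedSpace ℝ F] {T : E →L[ℝ] F} {V : Submodule ℝ E} {a : ι → E}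
  {s : Finset ι}

def polyCone (V : Submodule ℝ E) (a : ι → E) (s : Finset ι) : Set E :=
  {v | v ∈ V ∧ ∀ i ∈ s, 0 ≤ ⟪a i, v⟫}

lemma smul_mem_polyCone {c : ℝ} (hc : 0 ≤ c) {v : E} (hv : v ∈ polyCone V a s) :
    c • v ∈ polyCone V a s :=
  ⟨V.smul_mem c hv.1, fun i hi => by rw [real_inner_smul_right]; exact mul_nonneg hc (hv.2 i hi)⟩

lemma isClosed_polyCone [FiniteDimensional ℝ E] : IsClosed (polyCone V a s) := by
  have : polyCone V a s = (V : Set E) ∩ ⋂ i ∈ s, {v | 0 ≤ ⟪a i, v⟫} := by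
    ext v; simp [polyCone]
  rw [this]
  exact V.closed_of_finiteDimensional.inter <| isClosed_biInter fun i _ =>
    isClosed_le continuous_const (continuous_const.inner continuous_id)

/-- `w` lies in the lineality space of the cone, which therefore splits off. -/
lemma hoffmanBound_of_inf_orthogonal {w : E} {κ : ℝ} (hwV : w ∈ V) (hw : ‖w‖ = 1) (hTw : T w = 0)
    (ha : ∀ i ∈ s, ⟪a i, w⟫ = 0) (h : HoffmanBound T (polyCone (V ⊓ (ℝ ∙ w)ᗮ) a s) κ) :
    HoffmanBound T (polyCone V a s) κ := by
  intro v hv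
  set y := v - ⟪w, v⟫ • w
  have hTy : T y = T v := by simp [y, hTw]
  have hay : ∀ i ∈ s, ⟪a i, y⟫ = ⟪a i, v⟫ := fun i hi => by
    simp [y, inner_sub_right, real_inner_smul_right, ha i hi]
  have hy : y ∈ polyCone (V ⊓ (ℝ ∙ w)ᗮ) a s := by
    refine ⟨⟨V.sub_mem hv.1 (V.smul_mem _ hwV), ?_⟩, fun i hi => (hay i hi).symm ▸ hv.2 i hi⟩
    rw [SetLike.mem_coe, Submodule.mem_orthogonal_singleton_iff_inner_right, inner_sub_right,
      real_inner_smul_right, real_inner_self_eq_norm_sq, hw]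
    ring
  obtain ⟨k, ⟨⟨hkV, -⟩, hka⟩, hTk, hle⟩ := h y hy
  refine ⟨k + ⟪w, v⟫ • w, ⟨V.add_mem hkV (V.smul_mem _ hwV), fun i hi => ?_⟩, by simp [hTk, hTw],
    ?_⟩
  · rw [inner_add_right, real_inner_smul_right, ha i hi, mul_zero, add_zero]
    exact hka i hi
  · rw [← hTy, show v - (k + ⟪w, v⟫ • w) = y - k by simp only [y]; abel]
    exact hle

/-- The constraint `i` survives because `⟪a i, ·⟫` moves by at most `‖a i‖ * ‖v - k‖`. -/
lemma exists_of_hoffmanBound_erase {i : ι} [DecidableEq ι] {κ : ℝ} (hi : i ∈ s)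
    (h : HoffmanBound T (polyCone V a (s.erase i)) κ) {v : E} (hv : v ∈ polyCone V a s)
    (hvi : ‖a i‖ * (κ * ‖T v‖) < ⟪a i, v⟫) :
    ∃ k ∈ polyCone V a s, T k = 0 ∧ ‖v - k‖ ≤ κ * ‖T v‖ := by
  obtain ⟨k, ⟨hkV, hka⟩, hTk, hle⟩ :=
    h v ⟨hv.1, fun j hj => hv.2 j (Finset.mem_of_mem_erase hj)⟩
  refine ⟨k, ⟨hkV, fun j hj => ?_⟩, hTk, hle⟩
  rcases eq_or_ne j i with rfl | hne
  · have hcs := real_inner_le_norm (a j) (v - k)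
    rw [inner_sub_right] at hcs
    nlinarith [mul_le_mul_of_nonneg_left hle (norm_nonneg (a j))]
  · exact hka j (Finset.mem_erase.2 ⟨hne, hj⟩)

/-- Hoffman's error bound for a polyhedral cone. -/
theorem exists_hoffmanBound_polyCone [FiniteDimensional ℝ E] [DecidableEq ι]
    (T : E →L[ℝ] F) (a : ι → E) (V : Submodule ℝ E) (s : Finset ι) :
    ∃ κ ≥ 0, HoffmanBound T (polyCone V a s) κ := by
  induction hd : Module.finrank ℝ V + s.card using Nat.strong_induction_on generalizing V s with
  | _ d IH =>
  by_contra! h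
  obtain ⟨w, hwC, hw, hTw, u, hu, hbad⟩ := exists_tendsto_of_forall_not_hoffmanBound
    isClosed_polyCone (fun c hc v hv => smul_mem_polyCone hc hv) h
  by_cases hpos : ∃ i ∈ s, 0 < ⟪a i, w⟫
  · obtain ⟨i, hi, hwi⟩ := hpos
    have hcard : Module.finrank ℝ V + (s.erase i).card < d := by
      rw [← hd, Finset.card_erase_of_mem hi]
      have := Finset.card_pos.2 ⟨i, hi⟩
      omega
    obtain ⟨κ, -, hκ⟩ := IH _ hcard V (s.erase i) rfl
    have hlim : Tendsto (fun j => ‖a i‖ * (κ * ‖T (u j)‖)) atTop (𝓝 (‖a i‖ * (κ * ‖T w‖))) :=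
      ((T.continuous.tendsto w).comp hu).norm.const_mul κ |>.const_mul _
    rw [hTw, norm_zero, mul_zero, mul_zero] at hlim
    obtain ⟨j, hj, hjC, hjbad⟩ := (hlim.eventually_lt
      ((continuous_const.inner continuous_id).tendsto w |>.comp hu) hwi |>.and (hbad κ)).exists
    obtain ⟨k, hk, hTk, hle⟩ := exists_of_hoffmanBound_erase hi hκ hjC hj
    exact (hjbad k hk hTk).not_ge hle
  · simp only [not_exists, not_and, not_lt] at hpos
    have hlt : V ⊓ (ℝ ∙ w)ᗮ < V := by
      refine lt_of_le_of_ne inf_le_left fun heq => ?_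
      have : w ∈ (ℝ ∙ w)ᗮ := by
        have : w ∈ V ⊓ (ℝ ∙ w)ᗮ := by rw [heq]; exact hwC.1
        exact this.2
      rw [Submodule.mem_orthogonal_singleton_iff_inner_right, real_inner_self_eq_norm_sq, hw]
        at this
      norm_num at this
    have hdim : Module.finrank ℝ ↥(V ⊓ (ℝ ∙ w)ᗮ) + s.card < d := by
      rw [← hd]
      have := Submodule.finrank_lt_finrank_of_lt hlt
      omega
    obtain ⟨κ, hκ0, hκ⟩ := IH _ hdim _ s rfl
    exact h κ hκ0 (hoffmanBound_of_inf_orthogonal hwC.1 hw hTw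
      (fun i hi => le_antisymm (hpos i hi) (hwC.2 i hi)) hκ)

end PolyCone

section ErrorBound

variable {E F : Type*} [NormedAddCommGroup E] [NormedSpace ℝ E] [NormedAddCommGroup F]
  [NormedSpace ℝ F] {T : E →L[ℝ] F} {Z : Set E} {x₀ : E}

lemma exists_mem_fiber_of_hoffmanBound {C : Set E} {κ δ : ℝ} (hκ : 0 ≤ κ)
    (hC : HoffmanBound T C κ) (hZC : ∀ z ∈ Z, z - x₀ ∈ C) (hCZ : ∀ d ∈ C, ‖d‖ < δ → x₀ + d ∈ Z)
    {p : E} (hp : p ∈ Z) (hpx₀ : (1 + κ * ‖T‖) * ‖p - x₀‖ < δ) :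
    ∃ z ∈ Z, T z = T x₀ ∧ ‖p - z‖ ≤ κ * ‖T (p - x₀)‖ := by
  obtain ⟨e, he, hTe, hle⟩ := hC _ (hZC p hp)
  have hnorm : ‖e‖ ≤ (1 + κ * ‖T‖) * ‖p - x₀‖ := by
    calc ‖e‖ ≤ ‖p - x₀‖ + ‖p - x₀ - e‖ := norm_le_norm_add_norm_sub _ _
      _ ≤ ‖p - x₀‖ + κ * (‖T‖ * ‖p - x₀‖) := by
        gcongr
        exact hle.trans (mul_le_mul_of_nonneg_left (T.le_opNorm _) hκ)
      _ = (1 + κ * ‖T‖) * ‖p - x₀‖ := by ring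
  refine ⟨x₀ + e, hCZ e he (hnorm.trans_lt hpx₀), by simp [hTe], ?_⟩
  rwa [show p - (x₀ + e) = p - x₀ - e by abel]

lemma norm_sub_le_of_norm_sub_le_of_hoffman {x p z : E} {μ K κ Δ : ℝ} (hκ : 0 ≤ κ)
    (hxp : ‖x - p‖ ≤ √K * √Δ) (hTx : ‖T (x - x₀)‖ ≤ √Δ / √μ)
    (hpz : ‖p - z‖ ≤ κ * ‖T (p - x₀)‖) :
    ‖x - z‖ ≤ ((1 + κ * ‖T‖) * √K + κ / √μ) * √Δ := by
  have hTp : ‖T (p - x₀)‖ ≤ ‖T‖ * (√K * √Δ) + √Δ / √μ := by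
    calc ‖T (p - x₀)‖ = ‖T (x - x₀) - T (x - p)‖ := by
          rw [← map_sub, show x - x₀ - (x - p) = p - x₀ by abel]
      _ ≤ ‖T (x - x₀)‖ + ‖T‖ * ‖x - p‖ :=
          (norm_sub_le _ _).trans (by gcongr; exact T.le_opNorm _)
      _ ≤ ‖T‖ * (√K * √Δ) + √Δ / √μ := by nlinarith [norm_nonneg T]
  calc ‖x - z‖ ≤ ‖x - p‖ + ‖p - z‖ := norm_sub_le_norm_sub_add_norm_sub _ _ _
    _ ≤ √K * √Δ + κ * (‖T‖ * (√K * √Δ) + √Δ / √μ) :=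
      add_le_add hxp (hpz.trans (mul_le_mul_of_nonneg_left hTp hκ))
    _ = ((1 + κ * ‖T‖) * √K + κ / √μ) * √Δ := by ring

theorem exists_localErrorBound {f : E → ℝ} (hf : Continuous f) {μ K κ δ M : ℝ} (hμ : 0 < μ)
    (hK : 0 ≤ K) (hκ : 0 ≤ κ) (hδ : 0 < δ) (hM : ‖x₀‖ < M)
    (hTf : ∀ x, μ * ‖T (x - x₀)‖ ^ 2 ≤ f x - f x₀)
    (hproj : ∀ x, ‖x‖ ≤ M → ∃ p ∈ Z, ‖x - p‖ ^ 2 ≤ K * (f x - f x₀))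
    (hfiber : ∀ p ∈ Z, (1 + κ * ‖T‖) * ‖p - x₀‖ < δ →
      ∃ z ∈ Z, T z = T x₀ ∧ ‖p - z‖ ≤ κ * ‖T (p - x₀)‖)
    (hZ : ∀ z ∈ Z, T z = T x₀ → f z = f x₀) :
    ∃ β > 0, ∃ ε > 0, ∀ x, ‖x - x₀‖ ≤ ε → ∃ z, f z = f x₀ ∧ ‖x - z‖ ≤ β * √(f x - f x₀) := by
  have hlim : Tendsto (fun x => (1 + κ * ‖T‖) * (√(K * (f x - f x₀)) + ‖x - x₀‖)) (𝓝 x₀)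
      (𝓝 ((1 + κ * ‖T‖) * (√(K * (f x₀ - f x₀)) + ‖x₀ - x₀‖))) :=
    (by fun_prop : Continuous fun x => (1 + κ * ‖T‖) * (√(K * (f x - f x₀)) + ‖x - x₀‖)).tendsto _
  simp only [sub_self, mul_zero, Real.sqrt_zero, norm_zero, add_zero] at hlim
  obtain ⟨ε, hε, hball⟩ := Metric.nhds_basis_closedBall.eventually_iff.1
    ((hlim.eventually_lt_const hδ).and (continuous_norm.tendsto x₀ |>.eventually_lt_const hM))
  refine ⟨(1 + κ * ‖T‖) * √K + κ / √μ + 1, by positivity, ε, hε, fun x hx => ?_⟩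
  obtain ⟨hxδ, hxM⟩ := hball (mem_closedBall_iff_norm.2 hx)
  obtain ⟨p, hpZ, hxp⟩ := hproj x hxM.le
  have hxp' : ‖x - p‖ ≤ √K * √(f x - f x₀) := by
    rw [← Real.sqrt_mul hK]; exact Real.le_sqrt_of_sq_le hxp
  have hTx : ‖T (x - x₀)‖ ≤ √(f x - f x₀) / √μ := by
    rw [le_div_iff₀ (Real.sqrt_pos.2 hμ), ← Real.sqrt_sq (norm_nonneg _),
      ← Real.sqrt_mul' _ hμ.le]
    exact Real.sqrt_le_sqrt (by linarith [hTf x])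
  obtain ⟨z, hzZ, hTz, hpz⟩ := hfiber p hpZ <| by
    refine lt_of_le_of_lt (mul_le_mul_of_nonneg_left ?_ (by positivity)) hxδ
    rw [Real.sqrt_mul hK]
    calc ‖p - x₀‖ ≤ ‖p - x‖ + ‖x - x₀‖ := norm_sub_le_norm_sub_add_norm_sub _ _ _
      _ ≤ √K * √(f x - f x₀) + ‖x - x₀‖ := by rw [norm_sub_rev]; gcongr
  refine ⟨z, hZ z hzZ hTz, (norm_sub_le_of_norm_sub_le_of_hoffman hκ hxp' hTx hpz).trans ?_⟩
  exact mul_le_mul_of_nonneg_right (le_add_of_nonneg_right zero_le_one) (Real.sqrt_nonneg _)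

lemma inv_mul_sqrt_le_norm_of_subgradient {E : Type*} [NormedAddCommGroup E]
    [InnerProductSpace ℝ E] {f : E → ℝ} {x₀ x z ξ : E} {β : ℝ} (hβ : 0 < β) (hz : f z ≤ f x₀)
    (hxz : ‖x - z‖ ≤ β * √(f x - f x₀)) (hξ : ∀ y, f x + ⟪ξ, y - x⟫ ≤ f y) :
    β⁻¹ * √(f x - f x₀) ≤ ‖ξ‖ := by
  set Δ := f x - f x₀
  rcases le_or_gt Δ 0 with hΔ | hΔ
  · rw [Real.sqrt_eq_zero'.2 hΔ, mul_zero]; exact norm_nonneg ξ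
  have hsq : √Δ * √Δ ≤ √Δ * (β * ‖ξ‖) := by
    rw [Real.mul_self_sqrt hΔ.le]
    have hsub := hξ z
    have hcs := real_inner_le_norm ξ (x - z)
    rw [← neg_sub x z, inner_neg_right] at hsub
    nlinarith [mul_le_mul_of_nonneg_left hxz (norm_nonneg ξ)]
  rw [inv_mul_le_iff₀ hβ]
  exact le_of_mul_le_mul_left hsq (Real.sqrt_pos.2 hΔ)

end ErrorBound

/-- The quadratic term is invisible along segments shrinking to `x₀`. -/
lemma ConvexOn.le_of_le_add_mul_sq_norm {E : Type*} [SeminormedAddCommGroup E]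
    [NormedSpace ℝ E] {φ : E → ℝ} (hφ : ConvexOn ℝ Set.univ φ) {x₀ : E} {C : ℝ}
    (h : ∀ y, φ x₀ ≤ φ y + C * ‖y - x₀‖ ^ 2) (y : E) : φ x₀ ≤ φ y := by
  have hseg : ∀ t : ℝ, 0 < t → t ≤ 1 → φ x₀ - t * (C * ‖y - x₀‖ ^ 2) ≤ φ y := by
    intro t ht ht1
    have hconv := hφ.2 (Set.mem_univ x₀) (Set.mem_univ y) (sub_nonneg.2 ht1) ht.le
      (sub_add_cancel 1 t)
    have hnear := h ((1 - t) • x₀ + t • y)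
    rw [show (1 - t) • x₀ + t • y - x₀ = t • (y - x₀) by module, norm_smul, Real.norm_eq_abs,
      abs_of_pos ht, smul_eq_mul, smul_eq_mul] at *
    nlinarith
  have hlim : Tendsto (fun t : ℝ => φ x₀ - t * (C * ‖y - x₀‖ ^ 2)) (𝓝[>] 0)
      (𝓝 (φ x₀ - 0 * (C * ‖y - x₀‖ ^ 2))) :=
    (tendsto_const_nhds.sub (tendsto_id.mul_const _)).mono_left nhdsWithin_le_nhds
  rw [zero_mul, sub_zero] at hlim
  refine le_of_tendsto hlim ?_
  filter_upwards [Ioc_mem_nhdsGT one_pos] with t ht using hseg t ht.1 ht.2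

lemma Finset.exists_pos_forall_le {α : Type*} (s : Finset α) {f : α → ℝ}
    (hf : ∀ a ∈ s, 0 < f a) : ∃ δ > 0, ∀ a ∈ s, δ ≤ f a := by
  obtain ⟨δ, hδ, hδ0⟩ := (((Filter.eventually_all_finset s).2 fun a ha =>
    (eventually_le_nhds (hf a ha)).filter_mono nhdsWithin_le_nhds).and
    (self_mem_nhdsWithin : Set.Ioi (0 : ℝ) ∈ 𝓝[>] 0)).exists
  exact ⟨δ, hδ0, hδ⟩

lemma disjoint_of_mem_partition {ι : Type*} {G : Finset (Finset ι)}
    (hG : ∀ i, ∃! g, g ∈ G ∧ i ∈ g) {g h : Finset ι} (hg : g ∈ G) (hh : h ∈ G) (hne : g ≠ h) :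
    Disjoint g h :=
  Finset.disjoint_left.2 fun i hig hih => hne ((hG i).unique ⟨hg, hig⟩ ⟨hh, hih⟩)

section GroupProj

variable {ι : Type*} [DecidableEq ι]

/-- The paper's subvector `x_g`, padded with zeros so that it stays in `EuclideanSpace ℝ ι`. -/
def groupProj (g : Finset ι) : EuclideanSpace ℝ ι →ₗ[ℝ] EuclideanSpace ℝ ι where
  toFun x := WithLp.toLp 2 fun i => if i ∈ g then x i else 0
  map_add' x y := by ext i; by_cases h : i ∈ g <;> simp [h]
  map_smul' c x := by ext i; by_cases h : i ∈ g <;> simp [h]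

@[simp]
lemma groupProj_apply (g : Finset ι) (x : EuclideanSpace ℝ ι) (i : ι) :
    groupProj g x i = if i ∈ g then x i else 0 := rfl

@[simp]
lemma groupProj_groupProj (g : Finset ι) (x : EuclideanSpace ℝ ι) :
    groupProj g (groupProj g x) = groupProj g x := by
  ext i; by_cases h : i ∈ g <;> simp [h]

lemma groupProj_groupProj_of_disjoint {g h : Finset ι} (hgh : Disjoint g h)
    (x : EuclideanSpace ℝ ι) : groupProj g (groupProj h x) = 0 := by
  ext i
  by_cases hi : i ∈ g
  · simp [hi, Finset.disjoint_left.1 hgh hi]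
  · simp [hi]

lemma sum_groupProj {G : Finset (Finset ι)} (hG : ∀ i, ∃! g, g ∈ G ∧ i ∈ g)
    (x : EuclideanSpace ℝ ι) : ∑ g ∈ G, groupProj g x = x := by
  ext i
  obtain ⟨g, ⟨hg, hig⟩, huniq⟩ := hG i
  rw [WithLp.ofLp_sum, Finset.sum_apply, Finset.sum_eq_single g]
  · simp [hig]
  · intro h hh hne
    simp [show i ∉ h from fun hih => hne (huniq h ⟨hh, hih⟩)]
  · exact absurd hg

lemma groupProj_sum_of_mem {G : Finset (Finset ι)} (hG : ∀ i, ∃! g, g ∈ G ∧ i ∈ g)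
    {g : Finset ι} (hg : g ∈ G) (y : Finset ι → EuclideanSpace ℝ ι) :
    groupProj g (∑ h ∈ G, groupProj h (y h)) = groupProj g (y g) := by
  rw [map_sum, Finset.sum_eq_single g (fun h hh hne => groupProj_groupProj_of_disjoint
    (disjoint_of_mem_partition hG hg hh hne.symm) _) (absurd hg), groupProj_groupProj]

variable [Fintype ι]

lemma norm_groupProj (g : Finset ι) (x : EuclideanSpace ℝ ι) :
    ‖groupProj g x‖ = √(∑ i ∈ g, x i ^ 2) := by
  simp [EuclideanSpace.norm_eq, apply_ite, Finset.sum_ite_mem]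

lemma norm_groupProj_le (g : Finset ι) (x : EuclideanSpace ℝ ι) : ‖groupProj g x‖ ≤ ‖x‖ := by
  rw [norm_groupProj, EuclideanSpace.norm_eq]
  exact Real.sqrt_le_sqrt <| by
    simpa using Finset.sum_le_sum_of_subset_of_nonneg (Finset.subset_univ g)
      fun i _ _ => sq_nonneg (x i)

lemma inner_groupProj_left (g : Finset ι) (x y : EuclideanSpace ℝ ι) :
    ⟪groupProj g x, y⟫ = ⟪x, groupProj g y⟫ := by
  simp only [PiLp.inner_apply, RCLike.inner_apply, conj_trivial, groupProj_apply]
  exact Finset.sum_congr rfl fun i _ => by split_ifs <;> simp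

lemma inner_groupProj_groupProj (g : Finset ι) (x y : EuclideanSpace ℝ ι) :
    ⟪groupProj g x, groupProj g y⟫ = ⟪groupProj g x, y⟫ := by
  rw [inner_groupProj_left, groupProj_groupProj, inner_groupProj_left]

lemma continuous_groupProj (g : Finset ι) : Continuous (groupProj g) :=
  LinearMap.continuous_of_finiteDimensional _

variable {G : Finset (Finset ι)}

lemma sq_norm_eq_sum_groupProj (hG : ∀ i, ∃! g, g ∈ G ∧ i ∈ g) (x : EuclideanSpace ℝ ι) :
    ‖x‖ ^ 2 = ∑ g ∈ G, ‖groupProj g x‖ ^ 2 := by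
  conv_lhs => rw [← sum_groupProj hG x]
  rw [← real_inner_self_eq_norm_sq, sum_inner]
  refine Finset.sum_congr rfl fun g hg => ?_
  rw [inner_sum, ← real_inner_self_eq_norm_sq, Finset.sum_eq_single g]
  · intro h hh hne
    rw [inner_groupProj_left, groupProj_groupProj_of_disjoint
      (disjoint_of_mem_partition hG hg hh hne.symm), inner_zero_right]
  · exact absurd hg

lemma inner_eq_sum_groupProj (hG : ∀ i, ∃! g, g ∈ G ∧ i ∈ g) (v x : EuclideanSpace ℝ ι) :
    ⟪v, x⟫ = ∑ g ∈ G, ⟪groupProj g v, groupProj g x⟫ := by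
  conv_lhs => rw [← sum_groupProj hG x]
  rw [inner_sum]
  exact Finset.sum_congr rfl fun g _ => by rw [inner_groupProj_left, groupProj_groupProj]

end GroupProj

section GroupLasso

variable {ι H : Type*} [Fintype ι] [DecidableEq ι] [NormedAddCommGroup H] [InnerProductSpace ℝ H]

noncomputable def groupLasso (T : EuclideanSpace ℝ ι →L[ℝ] H) (b : H) (μ lam : ℝ)
    (G : Finset (Finset ι)) (x : EuclideanSpace ℝ ι) : ℝ :=
  μ * ‖T x - b‖ ^ 2 + lam * ∑ g ∈ G, ‖groupProj g x‖

noncomputable def leastSquaresGrad [CompleteSpace H] (T : EuclideanSpace ℝ ι →L[ℝ] H) (b : H)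
    (μ : ℝ) (x : EuclideanSpace ℝ ι) : EuclideanSpace ℝ ι :=
  (2 * μ) • ContinuousLinearMap.adjoint T (T x - b)

/-- The regulariser plus `⟪v, ·⟫`, split over the groups (`groupGap_eq`). -/
noncomputable def groupGap (lam : ℝ) (G : Finset (Finset ι)) (v x : EuclideanSpace ℝ ι) : ℝ :=
  ∑ g ∈ G, normGap lam (groupProj g v) (groupProj g x)

variable {T : EuclideanSpace ℝ ι →L[ℝ] H} {b : H} {μ lam : ℝ} {G : Finset (Finset ι)}

lemma convexOn_sum_norm_groupProj (G : Finset (Finset ι)) :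
    ConvexOn ℝ Set.univ fun x : EuclideanSpace ℝ ι => ∑ g ∈ G, ‖groupProj g x‖ := by
  induction G using Finset.induction_on with
  | empty => simpa using convexOn_const (0 : ℝ) convex_univ
  | insert g G hg ih =>
    simp_rw [Finset.sum_insert hg]
    exact (convexOn_univ_norm.comp_linearMap (groupProj g)).add ih

lemma convexOn_groupLasso (hμ : 0 ≤ μ) (hlam : 0 ≤ lam) :
    ConvexOn ℝ Set.univ (groupLasso T b μ lam G) := by
  have hsq := (convexOn_univ_norm.pow (fun _ _ => norm_nonneg _) 2).comp_affineMap
    (T.toLinearMap.toAffineMap - AffineMap.const ℝ _ b)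
  exact (hsq.smul hμ).add ((convexOn_sum_norm_groupProj G).smul hlam)

lemma continuous_groupLasso : Continuous (groupLasso T b μ lam G) := by
  have := continuous_groupProj (ι := ι)
  unfold groupLasso
  fun_prop

lemma groupGap_eq (hG : ∀ i, ∃! g, g ∈ G ∧ i ∈ g) (v x : EuclideanSpace ℝ ι) :
    groupGap lam G v x = lam * ∑ g ∈ G, ‖groupProj g x‖ + ⟪v, x⟫ := by
  rw [groupGap, inner_eq_sum_groupProj hG, Finset.mul_sum, ← Finset.sum_add_distrib]
  rfl

lemma groupLasso_eq_add [CompleteSpace H] (hG : ∀ i, ∃! g, g ∈ G ∧ i ∈ g)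
    (x₀ y : EuclideanSpace ℝ ι) :
    groupLasso T b μ lam G y = groupLasso T b μ lam G x₀ + μ * ‖T (y - x₀)‖ ^ 2 +
      (groupGap lam G (leastSquaresGrad T b μ x₀) y -
        groupGap lam G (leastSquaresGrad T b μ x₀) x₀) := by
  have hres : T y - b = (T x₀ - b) + T (y - x₀) := by rw [map_sub]; abel
  have hlin : ⟪leastSquaresGrad T b μ x₀, y⟫ - ⟪leastSquaresGrad T b μ x₀, x₀⟫ =
      2 * μ * ⟪T x₀ - b, T (y - x₀)⟫ := by
    rw [← inner_sub_right, leastSquaresGrad, real_inner_smul_left,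
      ContinuousLinearMap.adjoint_inner_left]
  rw [groupGap_eq hG, groupGap_eq hG, groupLasso, groupLasso, hres, norm_add_sq_real]
  linear_combination -hlin

lemma groupGap_add_groupProj (hG : ∀ i, ∃! g, g ∈ G ∧ i ∈ g) {g : Finset ι} (hg : g ∈ G)
    (v x w : EuclideanSpace ℝ ι) :
    groupGap lam G v (x + groupProj g w) = groupGap lam G v x +
      (normGap lam (groupProj g v) (groupProj g x + groupProj g w) -
        normGap lam (groupProj g v) (groupProj g x)) := by
  simp only [groupGap, ← Finset.add_sum_erase G _ hg, map_add, groupProj_groupProj]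
  have hrest : ∀ h ∈ G.erase g, groupProj h (groupProj g w) = 0 := fun h hh =>
    groupProj_groupProj_of_disjoint
      (disjoint_of_mem_partition hG (Finset.mem_of_mem_erase hh) hg (Finset.ne_of_mem_erase hh)) w
  rw [Finset.sum_congr rfl fun h hh => by rw [hrest h hh, add_zero]]
  ring

/-- `-leastSquaresGrad T b μ x₀` is a subgradient of the regulariser at `x₀`, group by group. -/
theorem groupLasso_optimality [CompleteSpace H] (hG : ∀ i, ∃! g, g ∈ G ∧ i ∈ g) (hμ : 0 ≤ μ)
    (hlam : 0 ≤ lam) {x₀ : EuclideanSpace ℝ ι}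
    (hmin : ∀ x, groupLasso T b μ lam G x₀ ≤ groupLasso T b μ lam G x) {g : Finset ι} (hg : g ∈ G) :
    ‖groupProj g (leastSquaresGrad T b μ x₀)‖ ≤ lam ∧
      normGap lam (groupProj g (leastSquaresGrad T b μ x₀)) (groupProj g x₀) = 0 := by
  set v := leastSquaresGrad T b μ x₀
  have hconv : ConvexOn ℝ Set.univ (groupGap lam G v) := by
    simp_rw [funext (groupGap_eq hG v)]
    exact ((convexOn_sum_norm_groupProj G).smul hlam).add
      ((innerSL ℝ v).toLinearMap.convexOn convex_univ)
  have hgap : ∀ y, groupGap lam G v x₀ ≤ groupGap lam G v y := by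
    refine hconv.le_of_le_add_mul_sq_norm (C := μ * ‖T‖ ^ 2) fun y => ?_
    have := hmin y
    rw [groupLasso_eq_add hG x₀ y] at this
    have hT : ‖T (y - x₀)‖ ^ 2 ≤ ‖T‖ ^ 2 * ‖y - x₀‖ ^ 2 := by
      rw [← mul_pow]; exact pow_le_pow_left₀ (norm_nonneg _) (T.le_opNorm _) 2
    nlinarith [mul_le_mul_of_nonneg_left hT hμ]
  have hdir : ∀ w, normGap lam (groupProj g v) (groupProj g x₀) ≤
      normGap lam (groupProj g v) (groupProj g x₀ + groupProj g w) := fun w => by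
    have := hgap (x₀ + groupProj g w)
    rw [groupGap_add_groupProj hG hg] at this
    linarith
  refine norm_le_and_normGap_eq_zero hlam ?_ ?_
  · simpa using hdir (-x₀)
  · simpa [sub_eq_add_neg] using hdir (-v)

end GroupLasso

section ZeroSet

variable {ι : Type*} [Fintype ι] [DecidableEq ι] {lam : ℝ} {G : Finset (Finset ι)}
  {v x₀ : EuclideanSpace ℝ ι}

def groupGapZeros (lam : ℝ) (G : Finset (Finset ι)) (v : EuclideanSpace ℝ ι) :
    Set (EuclideanSpace ℝ ι) :=
  {z | ∀ g ∈ G, normGap lam (groupProj g v) (groupProj g z) = 0}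

/-- The linear span of `groupGapZeros lam G v`: the line through `groupProj g v` on the groups
where `‖groupProj g v‖ = lam`, and `0` on the others. -/
noncomputable def groupGapTangent (lam : ℝ) (G : Finset (Finset ι)) (v : EuclideanSpace ℝ ι) :
    Submodule ℝ (EuclideanSpace ℝ ι) :=
  ⨅ g ∈ G, (if ‖groupProj g v‖ = lam then ℝ ∙ groupProj g v else ⊥).comap (groupProj g)

/-- Near `0`, `groupGapZeros lam G v - x₀` coincides with this cone (`sub_mem_groupGapCone`,
`add_mem_groupGapZeros`): the sign constraint only binds on the groups where `x₀` vanishes. -/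
noncomputable def groupGapCone (lam : ℝ) (G : Finset (Finset ι)) (v x₀ : EuclideanSpace ℝ ι) :
    Set (EuclideanSpace ℝ ι) :=
  polyCone (groupGapTangent lam G v) (fun g => -groupProj g v)
    (G.filter fun g => groupProj g x₀ = 0)

lemma groupGap_eq_zero {z : EuclideanSpace ℝ ι} (hz : z ∈ groupGapZeros lam G v) :
    groupGap lam G v z = 0 :=
  Finset.sum_eq_zero hz

lemma mem_groupGapTangent {d : EuclideanSpace ℝ ι} :
    d ∈ groupGapTangent lam G v ↔ ∀ g ∈ G,
      groupProj g d ∈ (if ‖groupProj g v‖ = lam then ℝ ∙ groupProj g v else ⊥) := by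
  simp [groupGapTangent, Submodule.mem_iInf]

lemma exists_sq_dist_le_groupGap (hG : ∀ i, ∃! g, g ∈ G ∧ i ∈ g) (hlam : 0 < lam)
    (hv : ∀ g ∈ G, ‖groupProj g v‖ ≤ lam) (M : ℝ) :
    ∃ K ≥ 0, ∀ x : EuclideanSpace ℝ ι, ‖x‖ ≤ M →
      ∃ p ∈ groupGapZeros lam G v, ‖x - p‖ ^ 2 ≤ K * groupGap lam G v x := by
  choose! K hK0 hK using fun g (hg : g ∈ G) => exists_sq_norm_sub_smul_le_normGap hlam (hv g hg) M
  refine ⟨∑ g ∈ G, K g, Finset.sum_nonneg hK0, fun x hx => ?_⟩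
  choose! s hsZ hs using fun g (hg : g ∈ G) => hK g hg _ ((norm_groupProj_le g x).trans hx)
  set p := ∑ g ∈ G, groupProj g (s g • v)
  have hp : ∀ g ∈ G, groupProj g p = s g • groupProj g v := fun g hg => by
    rw [groupProj_sum_of_mem hG hg, map_smul]
  refine ⟨p, fun g hg => hp g hg ▸ hsZ g hg, ?_⟩
  rw [sq_norm_eq_sum_groupProj hG, groupGap, Finset.mul_sum]
  refine Finset.sum_le_sum fun g hg => ?_
  rw [map_sub, hp g hg]
  exact (hs g hg).trans <| mul_le_mul_of_nonneg_right
    (Finset.single_le_sum (fun g hg => hK0 g hg) hg) (normGap_nonneg (hv g hg) _)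

lemma sub_mem_groupGapCone (hlam : 0 < lam) (hv : ∀ g ∈ G, ‖groupProj g v‖ ≤ lam)
    (hx₀ : x₀ ∈ groupGapZeros lam G v) {z : EuclideanSpace ℝ ι} (hz : z ∈ groupGapZeros lam G v) :
    z - x₀ ∈ groupGapCone lam G v x₀ := by
  refine ⟨mem_groupGapTangent.2 fun g hg => ?_, fun g hg => ?_⟩
  · rw [map_sub]
    split_ifs with heq
    · rw [eq_smul_of_normGap_eq_zero hlam heq (hz g hg),
        eq_smul_of_normGap_eq_zero hlam heq (hx₀ g hg)]
      exact Submodule.sub_mem _ (Submodule.smul_mem _ _ (Submodule.mem_span_singleton_self _))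
        (Submodule.smul_mem _ _ (Submodule.mem_span_singleton_self _))
    · have hlt := lt_of_le_of_ne (hv g hg) heq
      rw [eq_zero_of_normGap_eq_zero hlt (hz g hg), eq_zero_of_normGap_eq_zero hlt (hx₀ g hg),
        sub_zero]
      exact Submodule.zero_mem _
  · obtain ⟨hg, hg0⟩ := Finset.mem_filter.1 hg
    have := hz g hg
    rw [normGap] at this
    rw [inner_neg_left, ← inner_groupProj_groupProj, map_sub, hg0, sub_zero]
    nlinarith [norm_nonneg (groupProj g z)]

lemma add_mem_groupGapZeros (hlam : 0 < lam) (hv : ∀ g ∈ G, ‖groupProj g v‖ ≤ lam)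
    (hx₀ : x₀ ∈ groupGapZeros lam G v) {d : EuclideanSpace ℝ ι} (hd : d ∈ groupGapCone lam G v x₀)
    (hsmall : ∀ g ∈ G, groupProj g x₀ ≠ 0 → ‖d‖ < ‖groupProj g x₀‖) :
    x₀ + d ∈ groupGapZeros lam G v := by
  intro g hg
  have hdg := mem_groupGapTangent.1 hd.1 g hg
  rw [map_add]
  split_ifs at hdg with heq
  · obtain ⟨t, ht⟩ := Submodule.mem_span_singleton.1 hdg
    rw [← ht, eq_smul_of_normGap_eq_zero hlam heq (hx₀ g hg), ← add_smul]
    refine normGap_smul_self_eq_zero heq ?_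
    rw [neg_add_le_iff_le_add, add_zero, le_div_iff₀ hlam]
    by_cases h0 : groupProj g x₀ = 0
    · have := hd.2 g (Finset.mem_filter.2 ⟨hg, h0⟩)
      rw [inner_neg_left, ← inner_groupProj_groupProj, ← ht, real_inner_smul_right,
        real_inner_self_eq_norm_sq, heq] at this
      rw [h0, norm_zero]
      nlinarith
    · have hnorm : ‖groupProj g d‖ = |t| * lam := by rw [← ht, norm_smul, Real.norm_eq_abs, heq]
      have := (norm_groupProj_le g d).trans_lt (hsmall g hg h0)
      nlinarith [le_abs_self t]
  · have hlt := lt_of_le_of_ne (hv g hg) heq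
    rw [(Submodule.mem_bot ℝ).1 hdg, eq_zero_of_normGap_eq_zero hlt (hx₀ g hg), add_zero]
    simp [normGap]

end ZeroSet

section GroupLassoErrorBound

variable {ι H : Type*} [Fintype ι] [DecidableEq ι] [NormedAddCommGroup H] [InnerProductSpace ℝ H]
  [CompleteSpace H] {T : EuclideanSpace ℝ ι →L[ℝ] H} {b : H} {μ lam : ℝ} {G : Finset (Finset ι)}

theorem groupLasso_localErrorBound (hG : ∀ i, ∃! g, g ∈ G ∧ i ∈ g) (hμ : 0 < μ) (hlam : 0 < lam)
    {x₀ : EuclideanSpace ℝ ι} (hmin : ∀ x, groupLasso T b μ lam G x₀ ≤ groupLasso T b μ lam G x) :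
    ∃ β > 0, ∃ ε > 0, ∀ x, ‖x - x₀‖ ≤ ε →
      ∃ z, groupLasso T b μ lam G z = groupLasso T b μ lam G x₀ ∧
        ‖x - z‖ ≤ β * √(groupLasso T b μ lam G x - groupLasso T b μ lam G x₀) := by
  set v := leastSquaresGrad T b μ x₀
  have hopt := fun g (hg : g ∈ G) => groupLasso_optimality hG hμ.le hlam.le hmin hg
  have hv : ∀ g ∈ G, ‖groupProj g v‖ ≤ lam := fun g hg => (hopt g hg).1
  have hx₀ : x₀ ∈ groupGapZeros lam G v := fun g hg => (hopt g hg).2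
  have hgap : ∀ y, 0 ≤ groupGap lam G v y := fun y =>
    Finset.sum_nonneg fun g hg => normGap_nonneg (hv g hg) _
  have hF : ∀ y, groupLasso T b μ lam G y =
      groupLasso T b μ lam G x₀ + μ * ‖T (y - x₀)‖ ^ 2 + groupGap lam G v y := fun y => by
    rw [groupLasso_eq_add hG x₀ y, groupGap_eq_zero hx₀, sub_zero]
  obtain ⟨K, hK, hproj⟩ := exists_sq_dist_le_groupGap hG hlam hv (‖x₀‖ + 1)
  obtain ⟨κ, hκ, hbound⟩ := exists_hoffmanBound_polyCone T (fun g => -groupProj g v)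
    (groupGapTangent lam G v) (G.filter fun g => groupProj g x₀ = 0)
  obtain ⟨δ, hδ, hδG⟩ := (G.filter fun g => groupProj g x₀ ≠ 0).exists_pos_forall_le
    (f := fun g => ‖groupProj g x₀‖) fun g hg => norm_pos_iff.2 (Finset.mem_filter.1 hg).2
  refine exists_localErrorBound continuous_groupLasso hμ hK hκ hδ (lt_add_one _)
    (fun x => by linarith [hF x, hgap x]) (fun x hx => ?_)
    (fun p hp hpδ => exists_mem_fiber_of_hoffmanBound hκ hbound
      (fun z hz => sub_mem_groupGapCone hlam hv hx₀ hz)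
      (fun d hd hdδ => add_mem_groupGapZeros hlam hv hx₀ hd fun g hg h0 =>
        hdδ.trans_le (hδG g (Finset.mem_filter.2 ⟨hg, h0⟩))) hp hpδ)
    (fun z hz hTz => by rw [hF z, map_sub, hTz, sub_self, norm_zero, groupGap_eq_zero hz]; ring)
  obtain ⟨p, hp, hle⟩ := hproj x hx
  exact ⟨p, hp, hle.trans <| mul_le_mul_of_nonneg_left
    (by linarith [hF x, mul_nonneg hμ.le (sq_nonneg ‖T (x - x₀)‖)]) hK⟩

end GroupLassoErrorBound

theorem groupLasso_KL_exponent_half_general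
    (m n : ℕ) (A : Matrix (Fin m) (Fin n) ℝ) (b : Fin m → ℝ)
    (μ lam : ℝ) (hμ : 0 < μ) (hlam : 0 < lam)
    (G : Finset (Finset (Fin n)))
    (hG : ∀ i : Fin n, ∃! g, g ∈ G ∧ i ∈ g)
    (F : EuclideanSpace ℝ (Fin n) → ℝ)
    (hF : ∀ x, F x = μ * ∑ j, (A.mulVec x j - b j) ^ 2 +
        lam * ∑ g ∈ G, Real.sqrt (∑ i ∈ g, (x i) ^ 2)) :
    ConvexOn ℝ Set.univ F ∧
    ∀ xbar : EuclideanSpace ℝ (Fin n), (∀ x, F xbar ≤ F x) →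
      ∃ c > (0 : ℝ), ∃ ε > (0 : ℝ),
        ∀ x : EuclideanSpace ℝ (Fin n), ‖x - xbar‖ ≤ ε →
          ∀ ξ : EuclideanSpace ℝ (Fin n),
            (∀ y : EuclideanSpace ℝ (Fin n), F x + ⟪ξ, y - x⟫ ≤ F y) →
            c * Real.sqrt (F x - F xbar) ≤ ‖ξ‖ := by
  set T := LinearMap.toContinuousLinearMap (Matrix.toLpLin 2 2 A)
  obtain rfl : F = groupLasso T (WithLp.toLp 2 b) μ lam G := funext fun x => by
    simp [hF, groupLasso, EuclideanSpace.norm_sq_eq, norm_groupProj, T, Matrix.toLpLin_apply]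
  refine ⟨convexOn_groupLasso hμ.le hlam.le, fun xbar hmin => ?_⟩
  obtain ⟨β, hβ, ε, hε, hbound⟩ := groupLasso_localErrorBound hG hμ hlam hmin
  refine ⟨β⁻¹, inv_pos.2 hβ, ε, hε, fun x hx ξ hξ => ?_⟩
  obtain ⟨z, hz, hxz⟩ := hbound x hx
  exact inv_mul_sqrt_le_norm_of_subgradient hβ hz.le hxz hξ

/-- The group Lasso objective `F(x) = μ‖Ax − b‖² + λ·Σ_{g∈𝒢} ‖x_g‖`,
under the assumption that its infimum strictly exceeds that of the unregularized
least squares, is convex and satisfies the KL inequality with exponent `1/2`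
around every global minimizer. -/
theorem groupLasso_KL_exponent_half
    (m n : ℕ) (A : Matrix (Fin m) (Fin n) ℝ) (b : Fin m → ℝ)
    (μ lam : ℝ) (hμ : 0 < μ) (hlam : 0 < lam)
    (G : Finset (Finset (Fin n)))
    (hG : ∀ i : Fin n, ∃! g, g ∈ G ∧ i ∈ g)
    (F : EuclideanSpace ℝ (Fin n) → ℝ)
    (hF : ∀ x, F x = μ * ∑ j, (A.mulVec x j - b j) ^ 2 +
        lam * ∑ g ∈ G, Real.sqrt (∑ i ∈ g, (x i) ^ 2))
    (hinf : (⨅ x : EuclideanSpace ℝ (Fin n), μ * ∑ j, (A.mulVec x j - b j) ^ 2) <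
        ⨅ x : EuclideanSpace ℝ (Fin n), F x) :
    ConvexOn ℝ Set.univ F ∧
    ∀ xbar : EuclideanSpace ℝ (Fin n), (∀ x, F xbar ≤ F x) →
      ∃ c > (0 : ℝ), ∃ ε > (0 : ℝ),
        ∀ x : EuclideanSpace ℝ (Fin n), ‖x - xbar‖ ≤ ε →
          ∀ ξ : EuclideanSpace ℝ (Fin n),
            (∀ y : EuclideanSpace ℝ (Fin n), F x + ⟪ξ, y - x⟫ ≤ F y) →
            c * Real.sqrt (F x - F xbar) ≤ ‖ξ‖ :=
  groupLasso_KL_exponent_half_general m n A b μ lam hμ hlam G hG F hF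
end
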